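/- arXiv:1506.04706 — 3 statements merged into one kernel-verified Lean document; each statement's English description precedes it below -/
import Mathlib

section
/- Let d ≥ 1 and 2 ≤ p < ∞, and set θ = d(p−2)/(2p + d(p−2)). Then every measurable function f : ℝ^d → ℂ with f ∈ L^p(ℝ^d) and x ↦ |x| f(x) in L²(ℝ^d) belongs to L²(ℝ^d) and satisfies ‖f‖_{L²(ℝ^d)} ≤ 2 ‖ |x| f ‖_{L²(ℝ^d)}^{θ} · ‖f‖_{L^p(ℝ^d)}^{1−θ}. -/
/-!
Split `‖f‖₂²` over the ball `B_R` and its complement. On `B_R`, Hölder gives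
`‖f‖_{L²(B_R)} ≤ |B_R|^{1/2 - 1/p} ‖f‖_p`, and `|B_R| ≤ 2 (√2 R)^d` because the volume
`π^{d/2} / Γ(d/2 + 1)` of the unit ball is at most `2 · 2^{d/2}`. Off `B_R` we have `|x| ≥ R`, so
`‖f‖_{L²(B_Rᶜ)} ≤ R⁻¹ ‖|x| f‖₂`. For `R = (‖|x| f‖₂ / ‖f‖_p)^{1-θ} / √2` both pieces are at most
`√2 ‖|x| f‖₂^θ ‖f‖_p^{1-θ}`, and adding the squares gives the constant `2`.
-/

open MeasureTheory Real Complex Filter Topology ENNReal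

noncomputable section

/-- Euclidean space `ℝ^d`. -/
abbrev ESp (d : ℕ) := EuclideanSpace ℝ (Fin d)

theorem Real.Gamma_three_halves : Gamma (3 / 2) = √π / 2 := by
  rw [show (3 / 2 : ℝ) = 1 / 2 + 1 by norm_num, Gamma_add_one (by norm_num), Gamma_one_half_eq]
  ring

theorem Real.sqrt_pi_pow_le_two_mul_sqrt_two_pow_mul_Gamma (n : ℕ) :
    √π ^ n ≤ 2 * √2 ^ n * Gamma (n / 2 + 1) := by
  have hπ : π ≤ 4 := by linarith [pi_lt_d2]
  have hsπ : √π ^ 2 = π := sq_sqrt pi_pos.le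
  have hs2 : √2 ^ 2 = 2 := sq_sqrt zero_le_two
  have hs2_ge : (1.4 : ℝ) ≤ √2 := by nlinarith [sqrt_nonneg 2]
  induction n using Nat.strong_induction_on with
  | _ n ih =>
  match n with
  | 0 => norm_num
  | 1 =>
    norm_num [Gamma_three_halves]
    nlinarith [sqrt_nonneg π]
  | 2 =>
    norm_num [Gamma_two]
    linarith
  | 3 =>
    rw [show ((3 : ℕ) : ℝ) / 2 + 1 = 3 / 2 + 1 by norm_num, Gamma_add_one (by norm_num),
      Gamma_three_halves, pow_succ, hsπ, pow_succ, hs2]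
    nlinarith [sqrt_nonneg π, pi_lt_d2]
  | n + 4 =>
    -- the step `m → m + 2` multiplies the left side by `π` and the right side by `m + 2`,
    -- which is `≥ π` only for `m ≥ 2`: hence the four base cases
    have hΓ : Gamma ((n + 4 : ℕ) / 2 + 1) =
        ((n + 2 : ℕ) / 2 + 1) * Gamma ((n + 2 : ℕ) / 2 + 1) := by
      rw [← Gamma_add_one (by positivity)]
      push_cast
      ring_nf
    have hn : π ≤ (n + 4 : ℝ) := by linarith [(n.cast_nonneg : (0 : ℝ) ≤ n)]
    calc √π ^ (n + 4) = √π ^ (n + 2) * π := by rw [pow_add _ (n + 2) 2, hsπ]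
      _ ≤ 2 * √2 ^ (n + 2) * Gamma ((n + 2 : ℕ) / 2 + 1) * (n + 4) := by
        gcongr
        exact ih (n + 2) (by omega)
      _ = 2 * √2 ^ (n + 4) * Gamma ((n + 4 : ℕ) / 2 + 1) := by
        rw [hΓ, pow_add _ (n + 2) 2, hs2]
        push_cast
        ring

theorem EuclideanSpace.volume_ball_le {ι : Type*} [Fintype ι] [Nonempty ι]
    (x : EuclideanSpace ℝ ι) {r : ℝ} (hr : 0 ≤ r) :
    volume (Metric.ball x r) ≤ .ofReal (2 * (√2 * r) ^ Fintype.card ι) := by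
  have hΓ : 0 < Real.Gamma (Fintype.card ι / 2 + 1) := Real.Gamma_pos_of_pos (by positivity)
  rw [EuclideanSpace.volume_ball, ← ofReal_pow hr, ← ofReal_mul (by positivity)]
  refine ofReal_le_ofReal ?_
  calc r ^ Fintype.card ι * (√π ^ Fintype.card ι / Real.Gamma (Fintype.card ι / 2 + 1))
      ≤ r ^ Fintype.card ι * (2 * √2 ^ Fintype.card ι) := by
        gcongr
        exact (div_le_iff₀ hΓ).mpr (sqrt_pi_pow_le_two_mul_sqrt_two_pow_mul_Gamma _)
    _ = 2 * (√2 * r) ^ Fintype.card ι := by ring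

theorem Real.mul_div_rpow_eq_rpow_mul_rpow {a b : ℝ} (ha : 0 < a) (hb : 0 < b) (θ : ℝ) :
    b * (a / b) ^ θ = a ^ θ * b ^ (1 - θ) := by
  rw [div_rpow ha.le hb.le, rpow_sub hb, rpow_one]
  field_simp

theorem Real.mul_two_mul_rpow_pow_rpow_le {a b θ γ : ℝ} (ha : 0 < a) (hb : 0 < b) (n : ℕ)
    (hγ : γ ≤ 1 / 2) (hθ : (1 - θ) * n * γ = θ) :
    b * (2 * ((a / b) ^ (1 - θ)) ^ n) ^ γ ≤ √2 * (a ^ θ * b ^ (1 - θ)) := by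
  have hab : 0 < a / b := div_pos ha hb
  have h2 : (2 : ℝ) ^ γ ≤ √2 := by
    rw [sqrt_eq_rpow]
    exact rpow_le_rpow_of_exponent_le one_le_two hγ
  rw [mul_rpow zero_le_two (by positivity), ← rpow_natCast, ← rpow_mul hab.le,
    ← rpow_mul hab.le, hθ, mul_left_comm, mul_div_rpow_eq_rpow_mul_rpow ha hb]
  gcongr

theorem Real.div_div_rpow_eq_rpow_mul_rpow {a b : ℝ} (ha : 0 < a) (hb : 0 < b) (θ : ℝ) :
    a / (a / b) ^ (1 - θ) = a ^ θ * b ^ (1 - θ) := by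
  rw [div_eq_mul_inv, ← inv_rpow (div_pos ha hb).le, inv_div,
    mul_div_rpow_eq_rpow_mul_rpow hb ha, _root_.sub_sub_cancel, mul_comm]

section Localization

variable {α F : Type*} [MeasurableSpace α] {μ : Measure α} [NormedAddCommGroup F]

theorem eLpNorm_two_sq_eq_restrict_add_compl {s : Set α} (hs : MeasurableSet s) (f : α → F) :
    eLpNorm f 2 μ ^ 2 = eLpNorm f 2 (μ.restrict s) ^ 2 + eLpNorm f 2 (μ.restrict sᶜ) ^ 2 := by
  have h (ν : Measure α) : eLpNorm f 2 ν ^ 2 = ∫⁻ x, ‖f x‖ₑ ^ (2 : ℝ) ∂ν := by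
    simpa using eLpNorm_nnreal_pow_eq_lintegral (f := f) (μ := ν) (p := 2) two_ne_zero
  rw [h, h, h, lintegral_add_compl _ hs]

theorem eLpNorm_two_le_of_restrict_le {s : Set α} (hs : MeasurableSet s) {f : α → F}
    {c : ℝ≥0∞} (h : eLpNorm f 2 (μ.restrict s) ≤ c) (hc : eLpNorm f 2 (μ.restrict sᶜ) ≤ c) :
    eLpNorm f 2 μ ≤ .ofReal √2 * c := by
  rw [← ENNReal.pow_le_pow_left_iff two_ne_zero, eLpNorm_two_sq_eq_restrict_add_compl hs,
    mul_pow, ← ofReal_pow (sqrt_nonneg 2), sq_sqrt zero_le_two, ENNReal.ofReal_ofNat, two_mul]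
  gcongr

theorem eLpNorm_restrict_le_mul_measure_rpow {p q : ℝ≥0∞} (hpq : p ≤ q) {f : α → F}
    (hf : AEStronglyMeasurable f μ) (s : Set α) :
    eLpNorm f p (μ.restrict s) ≤ eLpNorm f q μ * μ s ^ (1 / p.toReal - 1 / q.toReal) := by
  simpa using (eLpNorm_le_eLpNorm_mul_rpow_measure_univ hpq hf.restrict).trans
    (mul_le_mul_left (eLpNorm_mono_measure f Measure.restrict_le_self) _)

variable {E 𝕜 : Type*} [NormedAddCommGroup E] [MeasurableSpace E] [RCLike 𝕜]

theorem ae_eq_zero_of_norm_mul_ae_eq_zero {μ : Measure E} [NullSingletonClass μ] {f : E → 𝕜}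
    (h : (fun x => (‖x‖ : 𝕜) * f x) =ᵐ[μ] 0) : f =ᵐ[μ] 0 := by
  filter_upwards [h, μ.ae_ne 0] with x hx hx0
  simpa [hx0] using hx

variable [OpensMeasurableSpace E]

theorem eLpNorm_restrict_compl_ball_le {R : ℝ} (hR : 0 < R) (f : E → 𝕜) (p : ℝ≥0∞)
    (μ : Measure E) :
    eLpNorm f p (μ.restrict (Metric.ball 0 R)ᶜ) ≤
      .ofReal R⁻¹ * eLpNorm (fun x => (‖x‖ : 𝕜) * f x) p μ := by
  refine (eLpNorm_le_mul_eLpNorm_of_ae_le_mul ?_ p).trans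
    (mul_le_mul_right (eLpNorm_mono_measure _ Measure.restrict_le_self) _)
  refine ae_restrict_of_forall_mem measurableSet_ball.compl fun x hx => ?_
  have hRx : R ≤ ‖x‖ := by simpa using hx
  rw [norm_mul, RCLike.norm_ofReal, abs_norm, ← mul_assoc, ← div_eq_inv_mul]
  exact le_mul_of_one_le_left (norm_nonneg _) ((one_le_div hR).mpr hRx)

theorem eLpNorm_two_le_of_ball_le {μ : Measure E} {f : E → 𝕜} (hf : AEStronglyMeasurable f μ)
    {q : ℝ≥0∞} (hq : 2 ≤ q) {R : ℝ} (hR : 0 < R) {c : ℝ≥0∞}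
    (h_ball : eLpNorm f q μ * μ (Metric.ball 0 R) ^ (1 / 2 - 1 / q.toReal) ≤ c)
    (h_far : .ofReal R⁻¹ * eLpNorm (fun x => (‖x‖ : 𝕜) * f x) 2 μ ≤ c) :
    eLpNorm f 2 μ ≤ .ofReal √2 * c := by
  refine eLpNorm_two_le_of_restrict_le measurableSet_ball ?_
    ((eLpNorm_restrict_compl_ball_le hR f 2 μ).trans h_far)
  simpa using (eLpNorm_restrict_le_mul_measure_rpow hq hf _).trans h_ball

end Localization

theorem EuclideanSpace.eLpNorm_two_le_two_mul_rpow_mul_rpow {ι 𝕜 : Type*} [Fintype ι]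
    [Nonempty ι] [RCLike 𝕜] {f : EuclideanSpace ℝ ι → 𝕜} (hf : AEStronglyMeasurable f volume)
    {p : ℝ} (hp : 2 ≤ p) {a b θ : ℝ} (ha : 0 < a) (hb : 0 < b)
    (hθ : (1 - θ) * Fintype.card ι * (1 / 2 - 1 / p) = θ)
    (hA : eLpNorm (fun x => (‖x‖ : 𝕜) * f x) 2 volume = .ofReal a)
    (hB : eLpNorm f (.ofReal p) volume = .ofReal b) :
    eLpNorm f 2 volume ≤ .ofReal (2 * (a ^ θ * b ^ (1 - θ))) := by
  have hγ : 0 ≤ 1 / 2 - 1 / p := sub_nonneg.mpr (one_div_le_one_div_of_le zero_lt_two hp)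
  set R := (a / b) ^ (1 - θ) / √2
  have hR : 0 < R := by positivity
  have h_ball : eLpNorm f (.ofReal p) volume * volume (Metric.ball (0 : EuclideanSpace ℝ ι) R) ^
      (1 / 2 - 1 / (ENNReal.ofReal p).toReal) ≤ .ofReal (√2 * (a ^ θ * b ^ (1 - θ))) := by
    rw [toReal_ofReal (by linarith), hB]
    calc .ofReal b * volume (Metric.ball (0 : EuclideanSpace ℝ ι) R) ^ (1 / 2 - 1 / p)
        ≤ .ofReal b * .ofReal (2 * (√2 * R) ^ Fintype.card ι) ^ (1 / 2 - 1 / p) := by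
          gcongr
          exact EuclideanSpace.volume_ball_le 0 hR.le
      _ = .ofReal (b * (2 * ((a / b) ^ (1 - θ)) ^ Fintype.card ι) ^ (1 / 2 - 1 / p)) := by
          rw [mul_div_cancel₀ _ (by positivity), ofReal_rpow_of_nonneg (by positivity) hγ,
            ofReal_mul hb.le]
      _ ≤ _ := ofReal_le_ofReal <| mul_two_mul_rpow_pow_rpow_le ha hb _
          (sub_le_self _ (by positivity)) hθ
  have h_far : .ofReal R⁻¹ * eLpNorm (fun x => (‖x‖ : 𝕜) * f x) 2 volume ≤
      .ofReal (√2 * (a ^ θ * b ^ (1 - θ))) := by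
    rw [hA, ← ofReal_mul (by positivity), inv_div, ← div_div_rpow_eq_rpow_mul_rpow ha hb,
      div_mul_eq_mul_div, mul_div_assoc]
  have hq : (2 : ℝ≥0∞) ≤ .ofReal p := (ENNReal.ofReal_ofNat 2).symm.trans_le (ofReal_le_ofReal hp)
  calc eLpNorm f 2 volume ≤ .ofReal √2 * .ofReal (√2 * (a ^ θ * b ^ (1 - θ))) :=
        eLpNorm_two_le_of_ball_le hf hq hR h_ball h_far
    _ = .ofReal (2 * (a ^ θ * b ^ (1 - θ))) := by
        rw [← ofReal_mul (sqrt_nonneg 2), ← mul_assoc, mul_self_sqrt zero_le_two]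

/-- Localization interpolation inequality:
`‖f‖_{L²} ≤ 2 ‖|x|f‖_{L²}^θ ‖f‖_{L^p}^{1-θ}` with `θ = d(p-2)/(2p + d(p-2))`. -/
theorem localization_interpolation (d : ℕ) (hd : 1 ≤ d) (p : ℝ) (hp : 2 ≤ p)
    (f : ESp d → ℂ) (hf : MemLp f (ENNReal.ofReal p) volume)
    (hxf : MemLp (fun x => (‖x‖ : ℂ) * f x) 2 volume) :
    MemLp f 2 volume ∧
    eLpNorm f 2 volume ≤
      ENNReal.ofReal 2 *
        (eLpNorm (fun x => (‖x‖ : ℂ) * f x) 2 volume) ^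
          ((d:ℝ)*(p-2)/(2*p + d*(p-2))) *
        (eLpNorm f (ENNReal.ofReal p) volume) ^
          (1 - (d:ℝ)*(p-2)/(2*p + d*(p-2))) := by
  set θ := (d:ℝ)*(p-2)/(2*p + d*(p-2)) with hθ_def
  by_cases hf0 : f =ᵐ[volume] 0
  · exact ⟨MemLp.zero.ae_eq hf0.symm, by simp [eLpNorm_congr_ae hf0]⟩
  have : Nonempty (Fin d) := ⟨⟨0, hd⟩⟩
  have hp₀ : 0 < p := by linarith
  have hA₀ := (eLpNorm_eq_zero_iff hxf.1 two_ne_zero).not.mpr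
    (mt ae_eq_zero_of_norm_mul_ae_eq_zero hf0)
  have hB₀ := (eLpNorm_eq_zero_iff hf.1 (ofReal_pos.mpr hp₀).ne').not.mpr hf0
  obtain ⟨a, ha, hA⟩ : ∃ a > 0, eLpNorm (fun x => (‖x‖ : ℂ) * f x) 2 volume = .ofReal a :=
    ⟨_, toReal_pos hA₀ hxf.2.ne, (ofReal_toReal hxf.2.ne).symm⟩
  obtain ⟨b, hb, hB⟩ : ∃ b > 0, eLpNorm f (.ofReal p) volume = .ofReal b :=
    ⟨_, toReal_pos hB₀ hf.2.ne, (ofReal_toReal hf.2.ne).symm⟩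
  have hθ : (1 - θ) * Fintype.card (Fin d) * (1 / 2 - 1 / p) = θ := by
    have hD : 2 * p + d * (p - 2) ≠ 0 := by nlinarith [(d.cast_nonneg : (0 : ℝ) ≤ d)]
    rw [Fintype.card_fin, hθ_def, one_sub_div hD, div_mul_eq_mul_div, div_mul_eq_mul_div,
      div_left_inj' hD]
    field_simp
    ring
  have hL2 := EuclideanSpace.eLpNorm_two_le_two_mul_rpow_mul_rpow hf.1 hp ha hb hθ hA hB
  refine ⟨⟨hf.1, hL2.trans_lt ofReal_lt_top⟩, hL2.trans_eq ?_⟩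
  rw [hA, hB, ofReal_mul zero_le_two, ofReal_mul (by positivity), ofReal_rpow_of_pos ha,
    ofReal_rpow_of_pos hb, mul_assoc]
end
end

section
/- Let d ∈ {2,3}, λ ≥ 0, μ ≥ 0, ω > |Ω|, σ > 0 and ϑ ∈ (−π/2, π/2). Then every smooth decaying solution ψ of the dissipative Gross–Pitaevskii equation on [0,∞) satisfies the mass bound M(t) ≤ M(0) · ( 1 + 2μ t cos ϑ · e^{2μ t cos ϑ} ) for all t ≥ 0. -/
open MeasureTheory Real Complex Filter Topology ENNReal

noncomputable section

/-- The `i`-th coordinate of `x ∈ ℝ^d` (zero if out of range); `x_1` is `coord x 0`, etc. -/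
def coord {d : ℕ} (x : ESp d) (i : ℕ) : ℝ := if h : i < d then x ⟨i, h⟩ else 0

/-- Partial derivative `∂_{x_{i+1}} f` (indices starting from `0`; zero if out of range). -/
def pdN {d : ℕ} (i : ℕ) (f : ESp d → ℂ) (x : ESp d) : ℂ :=
  if h : i < d then fderiv ℝ f x (EuclideanSpace.single ⟨i, h⟩ 1) else 0

/-- The Laplacian `Δf = ∑ᵢ ∂ᵢ∂ᵢ f`. -/
def lap {d : ℕ} (f : ESp d → ℂ) (x : ESp d) : ℂ := ∑ i : Fin d, pdN i (pdN i f) x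

/-- The angular momentum operator `Lf = -i (x₁ ∂_{x₂} f - x₂ ∂_{x₁} f)`. -/
def rotL {d : ℕ} (f : ESp d → ℂ) (x : ESp d) : ℂ :=
  -Complex.I * ((coord x 0 : ℂ) * pdN 1 f x - (coord x 1 : ℂ) * pdN 0 f x)

/-- Time derivative `∂ₜψ` (one-sided at `t = 0`). -/
def timeDeriv {d : ℕ} (ψ : ℝ → ESp d → ℂ) (t : ℝ) (x : ESp d) : ℂ :=
  derivWithin (fun s => ψ s x) (Set.Ici (0:ℝ)) t

/-- Schwartz-class decay, locally uniformly in `t ∈ s`: on every compact time set,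
all derivatives decay faster than any inverse power of `|x|`, uniformly. -/
def SchwartzDecay {d : ℕ} (s : Set ℝ) (ψ : ℝ → ESp d → ℂ) : Prop :=
  ∀ K : Set ℝ, IsCompact K → K ⊆ s → ∀ k n : ℕ, ∃ C : ℝ,
    ∀ t ∈ K, ∀ x : ESp d, ‖x‖ ^ k * ‖iteratedFDeriv ℝ n (ψ t) x‖ ≤ C

/-- A smooth decaying solution of the dissipative Gross–Pitaevskii equation
`-e^{iϑ} ∂ₜψ = -(1/2)Δψ + λ|ψ|^{2σ}ψ + (ω²/2)|x|²ψ - ΩLψ - μψ` on `s × ℝ^d`: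
jointly smooth, Schwartz class (along with `∂ₜψ`) locally uniformly in time,
and satisfying the equation pointwise. -/
def IsSmoothDecaySol (d : ℕ) (s : Set ℝ) (ϑ ω Ω lam mu σ : ℝ)
    (ψ : ℝ → ESp d → ℂ) : Prop :=
  ContDiffOn ℝ (⊤ : ℕ∞) (fun p : ℝ × ESp d => ψ p.1 p.2) (s ×ˢ Set.univ) ∧
  SchwartzDecay s ψ ∧ SchwartzDecay s (fun t => timeDeriv ψ t) ∧
  ∀ t ∈ s, ∀ x : ESp d,
    -Complex.exp ((ϑ : ℂ) * Complex.I) * timeDeriv ψ t x =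
      -(1/2 : ℂ) * lap (ψ t) x
      + ((lam * ‖ψ t x‖ ^ (2*σ) : ℝ) : ℂ) * ψ t x
      + (((ω^2/2) * ‖x‖^2 : ℝ) : ℂ) * ψ t x
      - (Ω : ℂ) * rotL (ψ t) x - (mu : ℂ) * ψ t x

/-- The total mass `M(t) = ∫ |ψ(t,x)|² dx`. -/
def Mass {d : ℕ} (ψ : ℝ → ESp d → ℂ) (t : ℝ) : ℝ := ∫ x : ESp d, ‖ψ t x‖ ^ 2

/-- The total energy
`E(t) = ∫ (1/2)|∇ψ|² + (ω²/2)|x|²|ψ|² + (λ/(σ+1))|ψ|^{2σ+2} - Ω Re(conj(ψ) Lψ) dx`. -/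
def Energy {d : ℕ} (ω Ω lam σ : ℝ) (ψ : ℝ → ESp d → ℂ) (t : ℝ) : ℝ :=
  ∫ x : ESp d,
    ((1/2) * ∑ i : Fin d, ‖pdN i (ψ t) x‖ ^ 2
      + (ω^2/2) * ‖x‖^2 * ‖ψ t x‖ ^ 2
      + (lam/(σ+1)) * ‖ψ t x‖ ^ (2*σ+2)
      - Ω * ((starRingEnd ℂ) (ψ t x) * rotL (ψ t) x).re)

namespace MGB

variable {d : ℕ}

def eV {d : ℕ} (i : Fin d) : ESp d := EuclideanSpace.single i (1:ℝ)

lemma norm_eV (i : Fin d) : ‖eV i‖ = 1 := by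
  simp [eV, EuclideanSpace.norm_single]

def mkS (f : ESp d → ℂ) (h1 : ContDiff ℝ (⊤ : ℕ∞) f)
    (h2 : ∀ k n : ℕ, ∃ C : ℝ, ∀ x, ‖x‖ ^ k * ‖iteratedFDeriv ℝ n f x‖ ≤ C) :
    SchwartzMap (ESp d) ℂ := ⟨f, h1.of_le (by simp), h2⟩

lemma sch_bound (F : SchwartzMap (ESp d) ℂ) : ∃ C : ℝ, 0 ≤ C ∧ ∀ x, ‖F x‖ ≤ C := by
  obtain ⟨C, hC⟩ := F.decay' 0 0
  have h : ∀ x : ESp d, ‖F x‖ ≤ C := fun x => by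
    exact (by simpa [norm_iteratedFDeriv_zero] using hC x : ‖F.toFun x‖ ≤ C)
  exact ⟨C, (norm_nonneg (F 0)).trans (h 0), h⟩

lemma integrable_of_dom {Z : Type*} [NormedAddCommGroup Z]
    (F : SchwartzMap (ESp d) ℂ) (k : ℕ) (C : ℝ) {g : ESp d → Z}
    (hg : AEStronglyMeasurable g (volume : Measure (ESp d)))
    (h : ∀ x, ‖g x‖ ≤ C * (‖x‖ ^ k * ‖F x‖)) : Integrable g :=
  ((F.integrable_pow_mul volume k).const_mul C).mono' hg (ae_of_all _ h)

lemma pdN_eq (f : ESp d → ℂ) (i : Fin d) (x : ESp d) :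
    pdN i f x = fderiv ℝ f x (eV i) := by
  simp only [pdN, eV, i.isLt, dif_pos]

def D1 (F : SchwartzMap (ESp d) ℂ) (i : Fin d) : SchwartzMap (ESp d) ℂ :=
  LineDeriv.lineDerivOpCLM ℝ (SchwartzMap (ESp d) ℂ) (eV i) F

def D2 (F : SchwartzMap (ESp d) ℂ) (i : Fin d) : SchwartzMap (ESp d) ℂ :=
  LineDeriv.lineDerivOpCLM ℝ (SchwartzMap (ESp d) ℂ) (eV i) (D1 F i)

lemma D1_apply (F : SchwartzMap (ESp d) ℂ) (i : Fin d) (x : ESp d) :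
    D1 F i x = pdN i (⇑F) x := by rw [pdN_eq]; rfl

lemma D2_apply (F : SchwartzMap (ESp d) ℂ) (i : Fin d) (x : ESp d) :
    D2 F i x = pdN i (pdN i ⇑F) x := by
  have h : pdN (i : ℕ) ⇑F = ⇑(D1 F i) := funext fun y => (D1_apply F i y).symm
  rw [h, pdN_eq]; rfl

lemma abs_coord_le (x : ESp d) (j : Fin d) : |x j| ≤ ‖x‖ := by
  rw [EuclideanSpace.norm_eq]
  rw [show |x j| = Real.sqrt ((x j)^2) from (Real.sqrt_sq_eq_abs _).symm]
  apply Real.sqrt_le_sqrt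
  have := Finset.single_le_sum (f := fun i => ‖x i‖^2) (fun i _ => sq_nonneg _)
    (Finset.mem_univ j)
  simpa [Real.norm_eq_abs, sq_abs] using this

lemma hasFDerivAt_conj {f : ESp d → ℂ} {x : ESp d} (hf : DifferentiableAt ℝ f x) :
    HasFDerivAt (fun y => (starRingEnd ℂ) (f y))
      ((Complex.conjCLE.toContinuousLinearMap).comp (fderiv ℝ f x)) x :=
  (Complex.conjCLE.toContinuousLinearMap.hasFDerivAt).comp x hf.hasFDerivAt

lemma fderiv_conj_apply {f : ESp d → ℂ} {x : ESp d} (hf : DifferentiableAt ℝ f x) (v : ESp d) :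
    fderiv ℝ (fun y => (starRingEnd ℂ) (f y)) x v = (starRingEnd ℂ) (fderiv ℝ f x v) := by
  rw [(hasFDerivAt_conj hf).fderiv]; rfl

end MGB
namespace MGB

variable {d : ℕ}

lemma integrable_conj_mul (G H : SchwartzMap (ESp d) ℂ) :
    Integrable (fun x : ESp d => (starRingEnd ℂ) (G x) * H x) volume := by
  obtain ⟨B, hBn, hB⟩ := sch_bound G
  refine integrable_of_dom H 0 B ?_ fun x => ?_
  · exact ((Complex.conjCLE.continuous.comp G.continuous).mul H.continuous).aestronglyMeasurable
  · simp only [pow_zero, one_mul, norm_mul, RCLike.norm_conj]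
    exact mul_le_mul_of_nonneg_right (hB x) (norm_nonneg _)

lemma integrable_coord_conj_mul (j : Fin d) (G H : SchwartzMap (ESp d) ℂ) :
    Integrable (fun x : ESp d => ((x j : ℝ) : ℂ) * ((starRingEnd ℂ) (G x) * H x)) volume := by
  obtain ⟨B, hBn, hB⟩ := sch_bound G
  refine integrable_of_dom H 1 B ?_ fun x => ?_
  · exact ((Complex.continuous_ofReal.comp (EuclideanSpace.proj (𝕜 := ℝ) j).continuous).mul
      ((Complex.conjCLE.continuous.comp G.continuous).mul H.continuous)).aestronglyMeasurable
  · simp only [pow_one, norm_mul, RCLike.norm_conj, Complex.norm_real, Real.norm_eq_abs]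
    calc |x j| * (‖G x‖ * ‖H x‖) ≤ ‖x‖ * (B * ‖H x‖) := by
          exact mul_le_mul (abs_coord_le x j)
            (mul_le_mul_of_nonneg_right (hB x) (norm_nonneg _))
            (by positivity) (norm_nonneg _)
      _ = B * (‖x‖ * ‖H x‖) := by ring

lemma ibp_a (F : SchwartzMap (ESp d) ℂ) (i : Fin d) :
    ∫ x : ESp d, (starRingEnd ℂ) (F x) * (D2 F i x) =
      - ∫ x : ESp d, (starRingEnd ℂ) (D1 F i x) * D1 F i x := by
  have hfd : ∀ x : ESp d, fderiv ℝ (fun y => (starRingEnd ℂ) (F y)) x (eV i)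
      = (starRingEnd ℂ) (D1 F i x) := fun x => fderiv_conj_apply F.differentiableAt (eV i)
  have hconjdiff : Differentiable ℝ (fun y => (starRingEnd ℂ) (F y)) := fun x =>
    (hasFDerivAt_conj F.differentiableAt).differentiableAt
  have h1 : Integrable (fun x : ESp d =>
      fderiv ℝ (fun y => (starRingEnd ℂ) (F y)) x (eV i) * D1 F i x) volume := by
    rw [show (fun x : ESp d => fderiv ℝ (fun y => (starRingEnd ℂ) (F y)) x (eV i) * D1 F i x)
        = fun x => (starRingEnd ℂ) (D1 F i x) * D1 F i x from funext fun x => by rw [hfd]]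
    exact integrable_conj_mul _ _
  have h2 : Integrable (fun x : ESp d =>
      (starRingEnd ℂ) (F x) * fderiv ℝ (⇑(D1 F i)) x (eV i)) volume :=
    integrable_conj_mul F (D2 F i)
  have h3 : Integrable (fun x : ESp d => (starRingEnd ℂ) (F x) * D1 F i x) volume :=
    integrable_conj_mul F (D1 F i)
  have key := integral_mul_fderiv_eq_neg_fderiv_mul_of_integrable (μ := volume)
    (f := fun y => (starRingEnd ℂ) (F y)) (g := ⇑(D1 F i)) (v := eV i)
    h1 h2 h3 (fun x _ => hconjdiff x) (fun x _ => (D1 F i).differentiable x)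
  calc ∫ x : ESp d, (starRingEnd ℂ) (F x) * (D2 F i x)
      = ∫ x : ESp d, (starRingEnd ℂ) (F x) * fderiv ℝ (⇑(D1 F i)) x (eV i) := rfl
    _ = - ∫ x : ESp d, fderiv ℝ (fun y => (starRingEnd ℂ) (F y)) x (eV i) * D1 F i x := key
    _ = - ∫ x : ESp d, (starRingEnd ℂ) (D1 F i x) * D1 F i x := by
        congr 1; exact integral_congr_ae (ae_of_all _ fun x => by simp only; rw [hfd])

end MGB
namespace MGB

variable {d : ℕ}

lemma ibp_b (F : SchwartzMap (ESp d) ℂ) (i j : Fin d) (hij : j ≠ i) :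
    (∫ x : ESp d, ((x j : ℝ) : ℂ) * ((starRingEnd ℂ) (F x) * D1 F i x)).re = 0 := by
  set cL : ESp d →L[ℝ] ℂ :=
    Complex.ofRealCLM.comp (EuclideanSpace.proj (𝕜 := ℝ) j) with hcL
  have hcL_apply : ∀ x : ESp d, cL x = ((x j : ℝ) : ℂ) := fun x => rfl
  have hD1 : ∀ x : ESp d, D1 F i x = fderiv ℝ (⇑F) x (eV i) := fun _ => rfl
  have hconjdiff : Differentiable ℝ (fun y => (starRingEnd ℂ) (F y)) := fun x =>
    (hasFDerivAt_conj F.differentiableAt).differentiableAt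
  have hu : Differentiable ℝ (fun y : ESp d => cL y * (starRingEnd ℂ) (F y)) :=
    cL.differentiable.mul hconjdiff
  have hcLe : cL (eV i) = 0 := by
    simp [hcL, eV, EuclideanSpace.single_apply, hij]
  have hud : ∀ x : ESp d, fderiv ℝ (fun y => cL y * (starRingEnd ℂ) (F y)) x (eV i)
      = ((x j : ℝ) : ℂ) * (starRingEnd ℂ) (D1 F i x) := by
    intro x
    rw [fderiv_fun_mul (cL.differentiableAt) (hconjdiff x)]
    simp only [ContinuousLinearMap.add_apply, ContinuousLinearMap.smul_apply, cL.fderiv,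
      hcLe, smul_eq_mul, mul_zero, add_zero, hcL_apply]
    rw [fderiv_conj_apply F.differentiableAt]
    rfl
  have h1 : Integrable (fun x : ESp d =>
      fderiv ℝ (fun y => cL y * (starRingEnd ℂ) (F y)) x (eV i) * F x) volume := by
    rw [show (fun x : ESp d => fderiv ℝ (fun y => cL y * (starRingEnd ℂ) (F y)) x (eV i) * F x)
        = fun x => ((x j : ℝ) : ℂ) * ((starRingEnd ℂ) (D1 F i x) * F x) from
        funext fun x => by rw [hud]; ring]
    exact integrable_coord_conj_mul j (D1 F i) F
  have h2 : Integrable (fun x : ESp d =>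
      (cL x * (starRingEnd ℂ) (F x)) * fderiv ℝ (⇑F) x (eV i)) volume := by
    rw [show (fun x : ESp d => (cL x * (starRingEnd ℂ) (F x)) * fderiv ℝ (⇑F) x (eV i))
        = fun x => ((x j : ℝ) : ℂ) * ((starRingEnd ℂ) (F x) * D1 F i x) from
        funext fun x => by rw [hcL_apply, hD1]; ring]
    exact integrable_coord_conj_mul j F (D1 F i)
  have h3 : Integrable (fun x : ESp d => (cL x * (starRingEnd ℂ) (F x)) * F x) volume := by
    rw [show (fun x : ESp d => (cL x * (starRingEnd ℂ) (F x)) * F x)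
        = fun x => ((x j : ℝ) : ℂ) * ((starRingEnd ℂ) (F x) * F x) from
        funext fun x => by rw [hcL_apply]; ring]
    exact integrable_coord_conj_mul j F F
  have key := integral_mul_fderiv_eq_neg_fderiv_mul_of_integrable (μ := volume)
    (f := fun y => cL y * (starRingEnd ℂ) (F y)) (g := ⇑F) (v := eV i)
    h1 h2 h3 (fun x _ => hu x) (fun x _ => F.differentiable x)
  set z : ℂ := ∫ x : ESp d, ((x j : ℝ) : ℂ) * ((starRingEnd ℂ) (F x) * D1 F i x) with hz
  have hzkey : z = - ∫ x : ESp d, ((x j : ℝ) : ℂ) * ((starRingEnd ℂ) (D1 F i x) * F x) := by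
    rw [hz]
    calc ∫ x : ESp d, ((x j : ℝ) : ℂ) * ((starRingEnd ℂ) (F x) * D1 F i x)
        = ∫ x : ESp d, (cL x * (starRingEnd ℂ) (F x)) * fderiv ℝ (⇑F) x (eV i) := by
          apply integral_congr_ae (ae_of_all _ fun x => ?_)
          rw [hcL_apply, hD1]; ring
      _ = - ∫ x : ESp d, fderiv ℝ (fun y => cL y * (starRingEnd ℂ) (F y)) x (eV i) * F x := key
      _ = - ∫ x : ESp d, ((x j : ℝ) : ℂ) * ((starRingEnd ℂ) (D1 F i x) * F x) := by
          congr 1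
          apply integral_congr_ae (ae_of_all _ fun x => ?_)
          simp only; rw [hud]; ring
  have hconjz : (starRingEnd ℂ) z = ∫ x : ESp d,
      ((x j : ℝ) : ℂ) * ((starRingEnd ℂ) (D1 F i x) * F x) := by
    rw [hz, ← integral_conj]
    apply integral_congr_ae (ae_of_all _ fun x => ?_)
    simp only [map_mul, Complex.conj_ofReal, Complex.conj_conj]
    ring
  have : z = - (starRingEnd ℂ) z := by rw [hconjz]; exact hzkey
  have h2re : z.re = - z.re := by
    conv_lhs => rw [this]
    simp [Complex.neg_re, Complex.conj_re]
  linarith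

end MGB
namespace MGB

variable {d : ℕ}

lemma coord_zero (hd : 2 ≤ d) (x : ESp d) :
    coord x 0 = x (⟨0, by omega⟩ : Fin d) := by
  simp only [coord]; rw [dif_pos (by omega : 0 < d)]

lemma coord_one (hd : 2 ≤ d) (x : ESp d) :
    coord x 1 = x (⟨1, by omega⟩ : Fin d) := by
  simp only [coord]; rw [dif_pos (by omega : 1 < d)]

lemma pdN_zero (hd : 2 ≤ d) (F : SchwartzMap (ESp d) ℂ) (x : ESp d) :
    pdN 0 ⇑F x = D1 F (⟨0, by omega⟩ : Fin d) x := by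
  simp only [pdN]; rw [dif_pos (by omega : 0 < d)]; rfl

lemma pdN_one (hd : 2 ≤ d) (F : SchwartzMap (ESp d) ℂ) (x : ESp d) :
    pdN 1 ⇑F x = D1 F (⟨1, by omega⟩ : Fin d) x := by
  simp only [pdN]; rw [dif_pos (by omega : 1 < d)]; rfl

lemma rotL_eq (hd : 2 ≤ d) (F : SchwartzMap (ESp d) ℂ) (x : ESp d) :
    rotL ⇑F x = -Complex.I * ((x (⟨0, by omega⟩ : Fin d) : ℝ) * D1 F (⟨1, by omega⟩ : Fin d) x
      - (x (⟨1, by omega⟩ : Fin d) : ℝ) * D1 F (⟨0, by omega⟩ : Fin d) x) := by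
  rw [rotL, coord_zero hd, coord_one hd, pdN_zero hd, pdN_one hd]

lemma norm_sq_eq_sum (x : ESp d) : ‖x‖^2 = ∑ i : Fin d, (x i)^2 := by
  rw [EuclideanSpace.norm_eq, Real.sq_sqrt (by positivity)]
  exact Finset.sum_congr rfl fun i _ => by rw [Real.norm_eq_abs, _root_.sq_abs]

lemma coord_sq_le (hd : 2 ≤ d) (x : ESp d) :
    (x (⟨0, by omega⟩ : Fin d))^2 + (x (⟨1, by omega⟩ : Fin d))^2 ≤ ‖x‖^2 := by
  rw [norm_sq_eq_sum]
  have hne : (⟨0, by omega⟩ : Fin d) ≠ (⟨1, by omega⟩ : Fin d) := by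
    intro h; exact absurd (congrArg Fin.val h) (by norm_num)
  have hp : (∑ i ∈ ({⟨0, by omega⟩, ⟨1, by omega⟩} : Finset (Fin d)), (x i)^2)
      = (x (⟨0, by omega⟩ : Fin d))^2 + (x (⟨1, by omega⟩ : Fin d))^2 :=
    Finset.sum_pair hne
  calc (x (⟨0, by omega⟩ : Fin d))^2 + (x (⟨1, by omega⟩ : Fin d))^2
      = ∑ i ∈ ({⟨0, by omega⟩, ⟨1, by omega⟩} : Finset (Fin d)), (x i)^2 := hp.symm
    _ ≤ ∑ i : Fin d, (x i)^2 :=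
        Finset.sum_le_sum_of_subset_of_nonneg (Finset.subset_univ _) (fun i _ _ => sq_nonneg _)

lemma d1_sq_le (hd : 2 ≤ d) (F : SchwartzMap (ESp d) ℂ) (x : ESp d) :
    ‖D1 F (⟨0, by omega⟩ : Fin d) x‖^2 + ‖D1 F (⟨1, by omega⟩ : Fin d) x‖^2
      ≤ ∑ i : Fin d, ‖D1 F i x‖^2 := by
  have hne : (⟨0, by omega⟩ : Fin d) ≠ (⟨1, by omega⟩ : Fin d) := by
    intro h; exact absurd (congrArg Fin.val h) (by norm_num)
  have hp : (∑ i ∈ ({⟨0, by omega⟩, ⟨1, by omega⟩} : Finset (Fin d)), ‖D1 F i x‖^2)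
      = ‖D1 F (⟨0, by omega⟩ : Fin d) x‖^2 + ‖D1 F (⟨1, by omega⟩ : Fin d) x‖^2 :=
    Finset.sum_pair hne
  calc ‖D1 F (⟨0, by omega⟩ : Fin d) x‖^2 + ‖D1 F (⟨1, by omega⟩ : Fin d) x‖^2
      = ∑ i ∈ ({⟨0, by omega⟩, ⟨1, by omega⟩} : Finset (Fin d)), ‖D1 F i x‖^2 := hp.symm
    _ ≤ ∑ i : Fin d, ‖D1 F i x‖^2 :=
        Finset.sum_le_sum_of_subset_of_nonneg (Finset.subset_univ _) (fun i _ _ => sq_nonneg _)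

lemma re_conj_rotL (hd : 2 ≤ d) (F : SchwartzMap (ESp d) ℂ) (x : ESp d) :
    ((starRingEnd ℂ) (F x) * rotL ⇑F x).re
      = (x (⟨0, by omega⟩ : Fin d))
          * ((starRingEnd ℂ) (F x) * D1 F (⟨1, by omega⟩ : Fin d) x).im
        - (x (⟨1, by omega⟩ : Fin d))
          * ((starRingEnd ℂ) (F x) * D1 F (⟨0, by omega⟩ : Fin d) x).im := by
  rw [rotL_eq hd]
  set a : ℝ := x (⟨0, by omega⟩ : Fin d)
  set b : ℝ := x (⟨1, by omega⟩ : Fin d)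
  set p0 : ℂ := D1 F (⟨0, by omega⟩ : Fin d) x
  set p1 : ℂ := D1 F (⟨1, by omega⟩ : Fin d) x
  set w : ℂ := (starRingEnd ℂ) (F x)
  have : w * (-Complex.I * ((a:ℂ) * p1 - (b:ℂ) * p0))
      = -Complex.I * ((a:ℂ) * (w * p1) - (b:ℂ) * (w * p0)) := by ring
  rw [this]
  simp [Complex.mul_re, Complex.mul_im, Complex.sub_im, Complex.sub_re]

lemma pointwise_pos {ω Ω : ℝ} (hd : 2 ≤ d) (hω : |Ω| < ω) (F : SchwartzMap (ESp d) ℂ)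
    (x : ESp d) :
    Ω * ((starRingEnd ℂ) (F x) * rotL ⇑F x).re
      ≤ (1/2) * ∑ i : Fin d, ‖D1 F i x‖^2 + (ω^2/2) * ‖x‖^2 * ‖F x‖^2 := by
  rw [re_conj_rotL hd]
  set a : ℝ := x (⟨0, by omega⟩ : Fin d)
  set b : ℝ := x (⟨1, by omega⟩ : Fin d)
  set p0 : ℂ := D1 F (⟨0, by omega⟩ : Fin d) x
  set p1 : ℂ := D1 F (⟨1, by omega⟩ : Fin d) x
  set w : ℂ := (starRingEnd ℂ) (F x)
  have hwp : ∀ z : ℂ, |(w * z).im| ≤ ‖F x‖ * ‖z‖ := fun z => by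
    calc |(w * z).im| ≤ ‖w * z‖ := Complex.abs_im_le_norm _
      _ = ‖F x‖ * ‖z‖ := by rw [norm_mul, RCLike.norm_conj]
  have h1 : Ω * (a * (w * p1).im) ≤ ω * (|a| * (‖F x‖ * ‖p1‖)) := by
    calc Ω * (a * (w * p1).im) ≤ |Ω * (a * (w * p1).im)| := le_abs_self _
      _ = |Ω| * (|a| * |(w * p1).im|) := by rw [abs_mul, abs_mul]
      _ ≤ ω * (|a| * (‖F x‖ * ‖p1‖)) := by
          apply mul_le_mul hω.le (mul_le_mul_of_nonneg_left (hwp p1) (abs_nonneg a))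
            (by positivity) (le_trans (abs_nonneg Ω) hω.le)
  have h0 : -(Ω * (b * (w * p0).im)) ≤ ω * (|b| * (‖F x‖ * ‖p0‖)) := by
    calc -(Ω * (b * (w * p0).im)) ≤ |Ω * (b * (w * p0).im)| := neg_le_abs _
      _ = |Ω| * (|b| * |(w * p0).im|) := by rw [abs_mul, abs_mul]
      _ ≤ ω * (|b| * (‖F x‖ * ‖p0‖)) := by
          apply mul_le_mul hω.le (mul_le_mul_of_nonneg_left (hwp p0) (abs_nonneg b))
            (by positivity) (le_trans (abs_nonneg Ω) hω.le)
  have hg1 : ω * (|a| * (‖F x‖ * ‖p1‖)) ≤ (ω^2 * |a|^2 * ‖F x‖^2 + ‖p1‖^2) / 2 := by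
    nlinarith [sq_nonneg (ω * |a| * ‖F x‖ - ‖p1‖)]
  have hg0 : ω * (|b| * (‖F x‖ * ‖p0‖)) ≤ (ω^2 * |b|^2 * ‖F x‖^2 + ‖p0‖^2) / 2 := by
    nlinarith [sq_nonneg (ω * |b| * ‖F x‖ - ‖p0‖)]
  rw [_root_.sq_abs] at hg1 hg0
  have hab : a^2 + b^2 ≤ ‖x‖^2 := coord_sq_le hd x
  have hsum : ‖p0‖^2 + ‖p1‖^2 ≤ ∑ i : Fin d, ‖D1 F i x‖^2 := d1_sq_le hd F x
  have h5 : ω^2 * ((a^2 + b^2) * ‖F x‖^2) ≤ ω^2 * (‖x‖^2 * ‖F x‖^2) :=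
    mul_le_mul_of_nonneg_left
      (mul_le_mul_of_nonneg_right hab (sq_nonneg (‖F x‖))) (sq_nonneg ω)
  nlinarith [h1, h0, hg1, hg0, h5, hsum]

end MGB
namespace MGB

variable {d : ℕ}

/-- The elliptic operator applied to `f`. -/
def Aop {d : ℕ} (ω Ω lam mu σ : ℝ) (f : ESp d → ℂ) (x : ESp d) : ℂ :=
  -(1/2 : ℂ) * lap f x
    + ((lam * ‖f x‖ ^ (2*σ) : ℝ) : ℂ) * f x
    + (((ω^2/2) * ‖x‖^2 : ℝ) : ℂ) * f x
    - (Ω : ℂ) * rotL f x - (mu : ℂ) * f x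

lemma conj_mul_self (z : ℂ) : (starRingEnd ℂ) z * z = ((‖z‖ : ℝ) : ℂ)^2 := by
  rw [mul_comm, Complex.mul_conj]
  norm_cast
  rw [Complex.normSq_eq_norm_sq]

lemma integrable_normsq (G : SchwartzMap (ESp d) ℂ) :
    Integrable (fun x : ESp d => ‖G x‖^2) volume := by
  obtain ⟨B, hBn, hB⟩ := sch_bound G
  refine integrable_of_dom G 0 B ?_ fun x => ?_
  · exact (G.continuous.norm.pow 2).aestronglyMeasurable
  · simp only [pow_zero, one_mul, Real.norm_eq_abs, _root_.sq_abs, abs_norm, _root_.abs_pow]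
    calc ‖G x‖^2 = ‖G x‖ * ‖G x‖ := sq (‖G x‖) ▸ by ring
      _ ≤ B * ‖G x‖ := mul_le_mul_of_nonneg_right (hB x) (norm_nonneg _)

lemma continuous_rotL (hd : 2 ≤ d) (F : SchwartzMap (ESp d) ℂ) :
    Continuous (rotL ⇑F) := by
  rw [show rotL ⇑F = fun x =>
      -Complex.I * ((x (⟨0, by omega⟩ : Fin d) : ℝ) * D1 F (⟨1, by omega⟩ : Fin d) x
      - (x (⟨1, by omega⟩ : Fin d) : ℝ) * D1 F (⟨0, by omega⟩ : Fin d) x)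
      from funext (rotL_eq hd F)]
  fun_prop

lemma integrable_conj_rotL (hd : 2 ≤ d) (F : SchwartzMap (ESp d) ℂ) :
    Integrable (fun x : ESp d => (starRingEnd ℂ) (F x) * rotL ⇑F x) volume := by
  obtain ⟨B1, hB1n, hB1⟩ := sch_bound (D1 F (⟨1, by omega⟩ : Fin d))
  obtain ⟨B0, hB0n, hB0⟩ := sch_bound (D1 F (⟨0, by omega⟩ : Fin d))
  refine integrable_of_dom F 1 (B1 + B0) ?_ fun x => ?_
  · exact ((Complex.conjCLE.continuous.comp F.continuous).mul
      (continuous_rotL hd F)).aestronglyMeasurable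
  · rw [norm_mul, RCLike.norm_conj, rotL_eq hd F]
    have hx0 : |x (⟨0, by omega⟩ : Fin d)| ≤ ‖x‖ := abs_coord_le _ _
    have hx1 : |x (⟨1, by omega⟩ : Fin d)| ≤ ‖x‖ := abs_coord_le _ _
    calc ‖F x‖ * ‖-Complex.I * ((x (⟨0, by omega⟩ : Fin d) : ℝ)
          * D1 F (⟨1, by omega⟩ : Fin d) x
          - (x (⟨1, by omega⟩ : Fin d) : ℝ) * D1 F (⟨0, by omega⟩ : Fin d) x)‖
        ≤ ‖F x‖ * (|x (⟨0, by omega⟩ : Fin d)| * ‖D1 F (⟨1, by omega⟩ : Fin d) x‖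
            + |x (⟨1, by omega⟩ : Fin d)| * ‖D1 F (⟨0, by omega⟩ : Fin d) x‖) := by
          rw [norm_mul, norm_neg, Complex.norm_I, one_mul]
          refine mul_le_mul_of_nonneg_left ?_ (norm_nonneg _)
          refine (norm_sub_le _ _).trans ?_
          simp only [norm_mul, Complex.norm_real, Real.norm_eq_abs, le_refl]
      _ ≤ ‖F x‖ * (‖x‖ * B1 + ‖x‖ * B0) := by
          refine mul_le_mul_of_nonneg_left ?_ (norm_nonneg _)
          exact add_le_add (mul_le_mul hx0 (hB1 x) (norm_nonneg _) (norm_nonneg _))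
            (mul_le_mul hx1 (hB0 x) (norm_nonneg _) (norm_nonneg _))
      _ = (B1 + B0) * (‖x‖ ^ 1 * ‖F x‖) := by ring

lemma energy_identity (hd : 2 ≤ d) {ω Ω lam mu σ : ℝ} (hω : |Ω| < ω) (hlam : 0 ≤ lam)
    (hσ : 0 < σ) (hmu : 0 ≤ mu) (F : SchwartzMap (ESp d) ℂ) :
    Integrable (fun x : ESp d => (starRingEnd ℂ) (F x) * Aop ω Ω lam mu σ ⇑F x) volume ∧
    ∃ R : ℝ,
      (∫ x : ESp d, (starRingEnd ℂ) (F x) * Aop ω Ω lam mu σ ⇑F x) = ((R : ℝ) : ℂ) ∧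
      -(mu * (∫ x : ESp d, ‖F x‖^2)) ≤ R := by
  obtain ⟨B0, hB0n, hB0⟩ := sch_bound F
  -- bound for the rpow factor
  have habs : ∀ x : ESp d, ‖F x‖ ^ (2*σ) ≤ (max B0 1) ^ (2*σ) := fun x => by
    apply Real.rpow_le_rpow (norm_nonneg _) _ (by positivity)
    exact (hB0 x).trans (le_max_left _ _)
  have habs_nonneg : ∀ x : ESp d, 0 ≤ ‖F x‖ ^ (2*σ) := fun x =>
    Real.rpow_nonneg (norm_nonneg _) _
  have habs_cont : Continuous (fun x : ESp d => ‖F x‖ ^ (2*σ)) :=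
    (Real.continuous_rpow_const (by positivity)).comp
      (continuous_norm.comp F.continuous)
  -- pointwise decomposition
  have hdecomp : ∀ x : ESp d, (starRingEnd ℂ) (F x) * Aop ω Ω lam mu σ ⇑F x =
      (-(1/2 : ℂ)) * ((starRingEnd ℂ) (F x) * lap ⇑F x)
      + (((lam * ‖F x‖ ^ (2*σ) + (ω^2/2) * ‖x‖^2 - mu) * ‖F x‖^2 : ℝ) : ℂ)
      - (Ω : ℂ) * ((starRingEnd ℂ) (F x) * rotL ⇑F x) := by
    intro x
    rw [Aop]
    simp only [Complex.ofReal_mul, Complex.ofReal_sub, Complex.ofReal_add, Complex.ofReal_pow,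
      Complex.ofReal_div, Complex.ofReal_ofNat]
    rw [← conj_mul_self (F x)]
    ring
  set i0 : Fin d := ⟨0, by omega⟩ with hi0
  set i1 : Fin d := ⟨1, by omega⟩ with hi1
  have hne : i0 ≠ i1 := by
    intro h; exact absurd (congrArg Fin.val h) (by simp [hi0, hi1])
  -- Laplacian pointwise rewrite
  have hlapmul : ∀ x : ESp d, (starRingEnd ℂ) (F x) * lap ⇑F x
      = ∑ i : Fin d, (starRingEnd ℂ) (F x) * D2 F i x := fun x => by
    rw [lap, Finset.mul_sum]
    exact Finset.sum_congr rfl fun i _ => by rw [D2_apply]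
  have hint_lap : Integrable (fun x : ESp d => (starRingEnd ℂ) (F x) * lap ⇑F x) volume := by
    rw [funext hlapmul]
    exact integrable_finset_sum _ fun i _ => integrable_conj_mul F (D2 F i)
  have hint_rot := integrable_conj_rotL hd F
  -- middle real integrand
  have h1 : Integrable (fun x : ESp d => lam * ‖F x‖ ^ (2*σ) * ‖F x‖^2) volume := by
    refine integrable_of_dom F 0 (lam * (max B0 1) ^ (2*σ) * B0) ?_ fun x => ?_
    · exact ((continuous_const.mul habs_cont).mul (F.continuous.norm.pow 2)).aestronglyMeasurable
    · rw [pow_zero, one_mul, Real.norm_eq_abs, _root_.abs_of_nonneg (by positivity)]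
      calc lam * ‖F x‖ ^ (2*σ) * ‖F x‖^2
          ≤ lam * ((max B0 1) ^ (2*σ)) * (B0 * ‖F x‖) := by
            apply mul_le_mul (mul_le_mul_of_nonneg_left (habs x) hlam)
            · rw [pow_two]; exact mul_le_mul_of_nonneg_right (hB0 x) (norm_nonneg _)
            · positivity
            · positivity
        _ = lam * (max B0 1) ^ (2*σ) * B0 * ‖F x‖ := by ring
  have h2 : Integrable (fun x : ESp d => (ω^2/2) * ‖x‖^2 * ‖F x‖^2) volume := by
    refine integrable_of_dom F 2 ((ω^2/2) * B0) ?_ fun x => ?_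
    · exact ((continuous_const.mul (continuous_norm.pow 2)).mul
        (F.continuous.norm.pow 2)).aestronglyMeasurable
    · rw [Real.norm_eq_abs, _root_.abs_of_nonneg (by positivity)]
      calc (ω^2/2) * ‖x‖^2 * ‖F x‖^2 ≤ (ω^2/2) * ‖x‖^2 * (B0 * ‖F x‖) := by
            apply mul_le_mul_of_nonneg_left _ (by positivity)
            rw [pow_two]; exact mul_le_mul_of_nonneg_right (hB0 x) (norm_nonneg _)
        _ = (ω^2/2) * B0 * (‖x‖^2 * ‖F x‖) := by ring
  have h3 : Integrable (fun x : ESp d => mu * ‖F x‖^2) volume :=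
    (integrable_normsq F).const_mul mu
  have hint_mid : Integrable (fun x : ESp d =>
      ((lam * ‖F x‖ ^ (2*σ) + (ω^2/2) * ‖x‖^2 - mu) * ‖F x‖^2 : ℝ)) volume := by
    rw [show (fun x : ESp d =>
        ((lam * ‖F x‖ ^ (2*σ) + (ω^2/2) * ‖x‖^2 - mu) * ‖F x‖^2 : ℝ))
        = fun x : ESp d => lam * ‖F x‖ ^ (2*σ) * ‖F x‖^2
          + (ω^2/2) * ‖x‖^2 * ‖F x‖^2 - mu * ‖F x‖^2 from funext fun x => by ring]
    exact (h1.add h2).sub h3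
  have hint_total : Integrable
      (fun x : ESp d => (starRingEnd ℂ) (F x) * Aop ω Ω lam mu σ ⇑F x) volume := by
    rw [funext hdecomp]
    exact ((hint_lap.const_mul _).add hint_mid.ofReal).sub (hint_rot.const_mul _)
  refine ⟨hint_total, ?_⟩
  -- the value of the integral
  set G : ℝ := ∑ i : Fin d, ∫ x : ESp d, ‖D1 F i x‖^2 with hG
  set W2 : ℝ := ∫ x : ESp d,
    ((lam * ‖F x‖ ^ (2*σ) + (ω^2/2) * ‖x‖^2 - mu) * ‖F x‖^2 : ℝ) with hW2
  set J4 : ℂ := ∫ x : ESp d, (starRingEnd ℂ) (F x) * rotL ⇑F x with hJ4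
  have hGi : ∀ i : Fin d, (∫ x : ESp d, (starRingEnd ℂ) (D1 F i x) * D1 F i x)
      = ((∫ x : ESp d, ‖D1 F i x‖^2 : ℝ) : ℂ) := fun i => by
    calc (∫ x : ESp d, (starRingEnd ℂ) (D1 F i x) * D1 F i x)
        = ∫ x : ESp d, ((‖D1 F i x‖^2 : ℝ) : ℂ) :=
          integral_congr_ae (ae_of_all _ fun x => by
            simp only; rw [conj_mul_self, Complex.ofReal_pow])
      _ = ((∫ x : ESp d, ‖D1 F i x‖^2 : ℝ) : ℂ) := integral_ofReal
  have hlapval : (∫ x : ESp d, (starRingEnd ℂ) (F x) * lap ⇑F x) = -((G : ℝ) : ℂ) := by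
    calc (∫ x : ESp d, (starRingEnd ℂ) (F x) * lap ⇑F x)
        = ∫ x : ESp d, ∑ i : Fin d, (starRingEnd ℂ) (F x) * D2 F i x :=
          integral_congr_ae (ae_of_all _ fun x => hlapmul x)
      _ = ∑ i : Fin d, ∫ x : ESp d, (starRingEnd ℂ) (F x) * D2 F i x :=
          integral_finset_sum _ (fun i _ => integrable_conj_mul F (D2 F i))
      _ = ∑ i : Fin d, -((∫ x : ESp d, ‖D1 F i x‖^2 : ℝ) : ℂ) :=
          Finset.sum_congr rfl fun i _ => by rw [ibp_a F i, hGi i]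
      _ = -((G : ℝ) : ℂ) := by rw [hG]; push_cast; rw [Finset.sum_neg_distrib]
  -- rotation term is real
  have hrot_pt : ∀ x : ESp d, (starRingEnd ℂ) (F x) * rotL ⇑F x
      = -Complex.I * (((x i0 : ℝ) : ℂ) * ((starRingEnd ℂ) (F x) * D1 F i1 x))
        + Complex.I * (((x i1 : ℝ) : ℂ) * ((starRingEnd ℂ) (F x) * D1 F i0 x)) := fun x => by
    rw [rotL_eq hd F x]; ring
  have hz10int : Integrable (fun x : ESp d =>
      ((x i0 : ℝ) : ℂ) * ((starRingEnd ℂ) (F x) * D1 F i1 x)) volume :=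
    integrable_coord_conj_mul i0 F (D1 F i1)
  have hz01int : Integrable (fun x : ESp d =>
      ((x i1 : ℝ) : ℂ) * ((starRingEnd ℂ) (F x) * D1 F i0 x)) volume :=
    integrable_coord_conj_mul i1 F (D1 F i0)
  have hJ4val : J4 = -Complex.I * (∫ x : ESp d,
        ((x i0 : ℝ) : ℂ) * ((starRingEnd ℂ) (F x) * D1 F i1 x))
      + Complex.I * (∫ x : ESp d,
        ((x i1 : ℝ) : ℂ) * ((starRingEnd ℂ) (F x) * D1 F i0 x)) := by
    calc J4 = ∫ x : ESp d,
          (-Complex.I * (((x i0 : ℝ) : ℂ) * ((starRingEnd ℂ) (F x) * D1 F i1 x))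
          + Complex.I * (((x i1 : ℝ) : ℂ) * ((starRingEnd ℂ) (F x) * D1 F i0 x))) :=
          integral_congr_ae (ae_of_all _ fun x => hrot_pt x)
      _ = (∫ x : ESp d, -Complex.I * (((x i0 : ℝ) : ℂ) * ((starRingEnd ℂ) (F x) * D1 F i1 x)))
          + ∫ x : ESp d, Complex.I * (((x i1 : ℝ) : ℂ) * ((starRingEnd ℂ) (F x) * D1 F i0 x)) :=
          integral_add (hz10int.const_mul _) (hz01int.const_mul _)
      _ = -Complex.I * (∫ x : ESp d,
            ((x i0 : ℝ) : ℂ) * ((starRingEnd ℂ) (F x) * D1 F i1 x))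
          + Complex.I * (∫ x : ESp d,
            ((x i1 : ℝ) : ℂ) * ((starRingEnd ℂ) (F x) * D1 F i0 x)) := by
          rw [integral_const_mul, integral_const_mul]
  have hJ4im : J4.im = 0 := by
    rw [hJ4val]
    have hz10 := ibp_b F i1 i0 hne
    have hz01 := ibp_b F i0 i1 hne.symm
    simp only [Complex.add_im, Complex.mul_im, Complex.neg_re, Complex.neg_im, Complex.I_re,
      Complex.I_im, zero_mul, one_mul, neg_zero, zero_add, neg_mul]
    rw [hz10, hz01]
    ring
  have hJ4re : J4 = ((J4.re : ℝ) : ℂ) := Complex.ext (by simp) (by simp [hJ4im])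
  have hintc1 : Integrable (fun x : ESp d =>
      -(1/2 : ℂ) * ((starRingEnd ℂ) (F x) * lap ⇑F x)) volume := hint_lap.const_mul _
  have hintc2 : Integrable (fun x : ESp d =>
      (((lam * ‖F x‖ ^ (2*σ) + (ω^2/2) * ‖x‖^2 - mu) * ‖F x‖^2 : ℝ) : ℂ)) volume :=
    hint_mid.ofReal
  have hintc3 : Integrable (fun x : ESp d =>
      (Ω : ℂ) * ((starRingEnd ℂ) (F x) * rotL ⇑F x)) volume := hint_rot.const_mul _
  have hintc12 : Integrable (fun x : ESp d =>
      -(1/2 : ℂ) * ((starRingEnd ℂ) (F x) * lap ⇑F x)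
      + (((lam * ‖F x‖ ^ (2*σ) + (ω^2/2) * ‖x‖^2 - mu) * ‖F x‖^2 : ℝ) : ℂ)) volume :=
    hintc1.add hintc2
  have hmid_c : (∫ x : ESp d,
      (((lam * ‖F x‖ ^ (2*σ) + (ω^2/2) * ‖x‖^2 - mu) * ‖F x‖^2 : ℝ) : ℂ))
      = ((W2 : ℝ) : ℂ) := by rw [hW2]; exact integral_ofReal
  have hval : (∫ x : ESp d, (starRingEnd ℂ) (F x) * Aop ω Ω lam mu σ ⇑F x)
      = (((1/2) * G + W2 - Ω * J4.re : ℝ) : ℂ) := by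
    calc (∫ x : ESp d, (starRingEnd ℂ) (F x) * Aop ω Ω lam mu σ ⇑F x)
        = ∫ x : ESp d,
            (-(1/2 : ℂ) * ((starRingEnd ℂ) (F x) * lap ⇑F x)
            + (((lam * ‖F x‖ ^ (2*σ) + (ω^2/2) * ‖x‖^2 - mu) * ‖F x‖^2 : ℝ) : ℂ)
            - (Ω : ℂ) * ((starRingEnd ℂ) (F x) * rotL ⇑F x)) :=
          integral_congr_ae (ae_of_all _ fun x => hdecomp x)
      _ = (∫ x : ESp d,
            (-(1/2 : ℂ) * ((starRingEnd ℂ) (F x) * lap ⇑F x)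
            + (((lam * ‖F x‖ ^ (2*σ) + (ω^2/2) * ‖x‖^2 - mu) * ‖F x‖^2 : ℝ) : ℂ)))
            - ∫ x : ESp d, (Ω : ℂ) * ((starRingEnd ℂ) (F x) * rotL ⇑F x) :=
          integral_sub hintc12 hintc3
      _ = (∫ x : ESp d, -(1/2 : ℂ) * ((starRingEnd ℂ) (F x) * lap ⇑F x))
            + (∫ x : ESp d,
              (((lam * ‖F x‖ ^ (2*σ) + (ω^2/2) * ‖x‖^2 - mu) * ‖F x‖^2 : ℝ) : ℂ))
            - ∫ x : ESp d, (Ω : ℂ) * ((starRingEnd ℂ) (F x) * rotL ⇑F x) := by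
          rw [integral_add hintc1 hintc2]
      _ = -(1/2 : ℂ) * (∫ x : ESp d, ((starRingEnd ℂ) (F x) * lap ⇑F x))
            + ((W2 : ℝ) : ℂ) - (Ω : ℂ) * J4 := by
          rw [integral_const_mul, integral_const_mul, hmid_c, ← hJ4]
      _ = (((1/2) * G + W2 - Ω * J4.re : ℝ) : ℂ) := by
          rw [hlapval]
          conv_lhs => rw [hJ4re]
          push_cast; ring
  refine ⟨(1/2) * G + W2 - Ω * J4.re, hval, ?_⟩
  -- the inequality
  have hu1int : Integrable (fun x : ESp d =>
      (lam * ‖F x‖ ^ (2*σ) + (ω^2/2) * ‖x‖^2) * ‖F x‖^2) volume := by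
    rw [show (fun x : ESp d => (lam * ‖F x‖ ^ (2*σ) + (ω^2/2) * ‖x‖^2) * ‖F x‖^2)
        = fun x : ESp d => lam * ‖F x‖ ^ (2*σ) * ‖F x‖^2
          + (ω^2/2) * ‖x‖^2 * ‖F x‖^2 from funext fun x => by ring]
    exact h1.add h2
  have hW2split : W2 = (∫ x : ESp d,
      (lam * ‖F x‖ ^ (2*σ) + (ω^2/2) * ‖x‖^2) * ‖F x‖^2)
      - mu * ∫ x : ESp d, ‖F x‖^2 := by
    calc W2 = ∫ x : ESp d,
          ((lam * ‖F x‖ ^ (2*σ) + (ω^2/2) * ‖x‖^2) * ‖F x‖^2 - mu * ‖F x‖^2) :=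
          integral_congr_ae (ae_of_all _ fun x => by simp only; ring)
      _ = (∫ x : ESp d, (lam * ‖F x‖ ^ (2*σ) + (ω^2/2) * ‖x‖^2) * ‖F x‖^2)
          - ∫ x : ESp d, mu * ‖F x‖^2 := integral_sub hu1int h3
      _ = (∫ x : ESp d, (lam * ‖F x‖ ^ (2*σ) + (ω^2/2) * ‖x‖^2) * ‖F x‖^2)
          - mu * ∫ x : ESp d, ‖F x‖^2 := by rw [integral_const_mul]
  have hr4 : J4.re = ∫ x : ESp d, ((starRingEnd ℂ) (F x) * rotL ⇑F x).re := by
    rw [hJ4]; exact (integral_re hint_rot).symm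
  have hsum_int : Integrable (fun x : ESp d => ∑ i : Fin d, ‖D1 F i x‖^2) volume :=
    integrable_finset_sum _ fun i _ => integrable_normsq (D1 F i)
  have hGval : (1/2) * G = ∫ x : ESp d, (1/2) * ∑ i : Fin d, ‖D1 F i x‖^2 := by
    rw [hG, ← integral_finset_sum _ (fun i _ => integrable_normsq (D1 F i))]
    exact (integral_const_mul _ _).symm
  have hcomb : Integrable (fun x : ESp d => (1/2) * ∑ i : Fin d, ‖D1 F i x‖^2
      + (lam * ‖F x‖ ^ (2*σ) + (ω^2/2) * ‖x‖^2) * ‖F x‖^2) volume :=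
    (hsum_int.const_mul _).add hu1int
  have hre_int : Integrable (fun x : ESp d =>
      Ω * ((starRingEnd ℂ) (F x) * rotL ⇑F x).re) volume := hint_rot.re.const_mul Ω
  have hkey : 0 ≤ (1/2) * G + (∫ x : ESp d,
      (lam * ‖F x‖ ^ (2*σ) + (ω^2/2) * ‖x‖^2) * ‖F x‖^2) - Ω * J4.re := by
    have hstep : (∫ x : ESp d, ((1/2) * ∑ i : Fin d, ‖D1 F i x‖^2
          + (lam * ‖F x‖ ^ (2*σ) + (ω^2/2) * ‖x‖^2) * ‖F x‖^2
          - Ω * ((starRingEnd ℂ) (F x) * rotL ⇑F x).re))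
        = (1/2) * G + (∫ x : ESp d,
          (lam * ‖F x‖ ^ (2*σ) + (ω^2/2) * ‖x‖^2) * ‖F x‖^2) - Ω * J4.re := by
      calc (∫ x : ESp d, ((1/2) * ∑ i : Fin d, ‖D1 F i x‖^2
            + (lam * ‖F x‖ ^ (2*σ) + (ω^2/2) * ‖x‖^2) * ‖F x‖^2
            - Ω * ((starRingEnd ℂ) (F x) * rotL ⇑F x).re))
          = (∫ x : ESp d, ((1/2) * ∑ i : Fin d, ‖D1 F i x‖^2
            + (lam * ‖F x‖ ^ (2*σ) + (ω^2/2) * ‖x‖^2) * ‖F x‖^2))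
            - ∫ x : ESp d, Ω * ((starRingEnd ℂ) (F x) * rotL ⇑F x).re :=
            integral_sub hcomb hre_int
        _ = ((∫ x : ESp d, (1/2) * ∑ i : Fin d, ‖D1 F i x‖^2)
            + ∫ x : ESp d, (lam * ‖F x‖ ^ (2*σ) + (ω^2/2) * ‖x‖^2) * ‖F x‖^2)
            - ∫ x : ESp d, Ω * ((starRingEnd ℂ) (F x) * rotL ⇑F x).re := by
            rw [integral_add (hsum_int.const_mul _) hu1int]
        _ = (1/2) * G + (∫ x : ESp d,
            (lam * ‖F x‖ ^ (2*σ) + (ω^2/2) * ‖x‖^2) * ‖F x‖^2) - Ω * J4.re := by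
            rw [← hGval, integral_const_mul, ← hr4]
    rw [← hstep]
    refine integral_nonneg fun x => ?_
    have hp := pointwise_pos hd hω F x
    have hnn : 0 ≤ lam * ‖F x‖ ^ (2*σ) * ‖F x‖^2 :=
      mul_nonneg (mul_nonneg hlam (habs_nonneg x)) (sq_nonneg _)
    simp only [Pi.zero_apply]
    nlinarith [hp, hnn]
  linarith [hkey, hW2split]

end MGB
namespace MGB

variable {d : ℕ}

lemma decay_bound {g : ESp d → ℂ} {k : ℕ} {C0 Ck : ℝ} (h0 : ∀ x, ‖g x‖ ≤ C0)
    (hk : ∀ x, ‖x‖^k * ‖g x‖ ≤ Ck) (x : ESp d) :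
    ‖g x‖ ≤ 2^k * (C0 + Ck) * ((1 + ‖x‖)^k)⁻¹ := by
  have hpos : (0:ℝ) < (1 + ‖x‖)^k := by positivity
  rw [← div_eq_mul_inv, le_div_iff₀ hpos]
  have h1 : (1 + ‖x‖)^k ≤ 2^k * (1 + ‖x‖^k) := by
    calc (1 + ‖x‖)^k ≤ (2 * max 1 ‖x‖)^k := by
          apply pow_le_pow_left₀ (by positivity)
          rcases le_total ‖x‖ 1 with h | h
          · rw [max_eq_left h]; linarith
          · rw [max_eq_right h]; linarith
      _ = 2^k * (max 1 ‖x‖)^k := mul_pow 2 _ k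
      _ ≤ 2^k * (1 + ‖x‖^k) := by
          apply mul_le_mul_of_nonneg_left _ (by positivity)
          rcases le_total ‖x‖ 1 with h | h
          · rw [max_eq_left h, one_pow]
            have := pow_nonneg (norm_nonneg x) k
            linarith
          · rw [max_eq_right h]
            linarith
  calc ‖g x‖ * (1 + ‖x‖)^k ≤ ‖g x‖ * (2^k * (1 + ‖x‖^k)) :=
        mul_le_mul_of_nonneg_left h1 (norm_nonneg _)
    _ = 2^k * (‖g x‖ * 1 + ‖x‖^k * ‖g x‖) := by ring
    _ ≤ 2^k * (C0 + Ck) := by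
        apply mul_le_mul_of_nonneg_left _ (by positivity)
        rw [mul_one]
        exact add_le_add (h0 x) (hk x)

lemma integrable_inv_pow : Integrable (fun x : ESp d => ((1 + ‖x‖)^(d+1))⁻¹) volume := by
  have h := integrable_one_add_norm (E := ESp d) (μ := volume) (r := (d+1:ℝ))
    (by rw [finrank_euclideanSpace_fin]; push_cast; linarith)
  have heq : ∀ x : ESp d, ((1 + ‖x‖)^(d+1))⁻¹ = (1 + ‖x‖) ^ (-(d+1:ℝ)) := fun x => by
    rw [Real.rpow_neg (by positivity)]
    congr 1
    rw [← Real.rpow_natCast (1 + ‖x‖) (d+1)]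
    norm_num
  rw [funext heq]; exact h

lemma hasDerivAt_normsq {χ : ℝ → ℂ} {χ' : ℂ} {s : ℝ} (h : HasDerivAt χ χ' s) :
    HasDerivAt (fun u => ‖χ u‖^2) (2 * ((starRingEnd ℂ) (χ s) * χ').re) s := by
  have hconj : HasDerivAt (fun u => (starRingEnd ℂ) (χ u)) ((starRingEnd ℂ) χ') s :=
    (Complex.conjCLE.toContinuousLinearMap.hasFDerivAt (x := χ s)).comp_hasDerivAt s h
  have hmul := hconj.mul h
  have hre : HasDerivAt (fun u => ((starRingEnd ℂ) (χ u) * χ u).re)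
      (((starRingEnd ℂ) χ' * χ s + (starRingEnd ℂ) (χ s) * χ').re) s :=
    by have h' := (Complex.reCLM.hasFDerivAt
      (x := (starRingEnd ℂ) (χ s) * χ s)).comp_hasDerivAt s hmul; exact h'
  have hfun : (fun u => ((starRingEnd ℂ) (χ u) * χ u).re)
      = fun u => ‖χ u‖^2 := funext fun u => by
    rw [mul_comm, Complex.mul_conj, Complex.ofReal_re, ← Complex.sq_norm]
  have hval : (((starRingEnd ℂ) χ' * χ s + (starRingEnd ℂ) (χ s) * χ').re)
      = 2 * ((starRingEnd ℂ) (χ s) * χ').re := by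
    simp [Complex.add_re, Complex.mul_re, Complex.conj_re, Complex.conj_im]
    ring
  rw [hfun, hval] at hre
  exact hre

section Slice

variable {ψ : ℝ → ESp d → ℂ}

lemma slice_contDiff (hψ1 : ContDiffOn ℝ (⊤ : ℕ∞) (fun p : ℝ × ESp d => ψ p.1 p.2)
    (Set.Ici 0 ×ˢ Set.univ)) {t : ℝ} (ht : 0 ≤ t) : ContDiff ℝ (⊤ : ℕ∞) (ψ t) := by
  rw [← contDiffOn_univ]
  exact hψ1.comp (contDiffOn_const.prodMk contDiffOn_id) fun x _ => ⟨ht, trivial⟩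

lemma decay_slice (h2 : SchwartzDecay (Set.Ici 0) ψ) {t : ℝ} (ht : 0 ≤ t) :
    ∀ k n : ℕ, ∃ C : ℝ, ∀ x, ‖x‖ ^ k * ‖iteratedFDeriv ℝ n (ψ t) x‖ ≤ C := fun k n => by
  obtain ⟨C, hC⟩ := h2 {t} isCompact_singleton (Set.singleton_subset_iff.mpr ht) k n
  exact ⟨C, fun x => hC t rfl x⟩

/-- The time-slice as a Schwartz map. -/
def Fslice (hψ1 : ContDiffOn ℝ (⊤ : ℕ∞) (fun p : ℝ × ESp d => ψ p.1 p.2) (Set.Ici 0 ×ˢ Set.univ))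
    (h2 : SchwartzDecay (Set.Ici 0) ψ) {t : ℝ} (ht : 0 ≤ t) : SchwartzMap (ESp d) ℂ :=
  mkS (ψ t) (slice_contDiff hψ1 ht) (decay_slice h2 ht)

@[simp] lemma Fslice_apply (hψ1 : ContDiffOn ℝ (⊤ : ℕ∞) (fun p : ℝ × ESp d => ψ p.1 p.2)
    (Set.Ici 0 ×ˢ Set.univ)) (h2 : SchwartzDecay (Set.Ici 0) ψ) {t : ℝ} (ht : 0 ≤ t) :
    ⇑(Fslice hψ1 h2 ht) = ψ t := rfl

lemma time_hasDerivAt (hψ1 : ContDiffOn ℝ (⊤ : ℕ∞) (fun p : ℝ × ESp d => ψ p.1 p.2)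
    (Set.Ici 0 ×ˢ Set.univ)) {t : ℝ} (ht : 0 < t) (x : ESp d) :
    HasDerivAt (fun s => ψ s x) (timeDeriv ψ t x) t := by
  have hopen : IsOpen ((Set.Ioi (0:ℝ)) ×ˢ (Set.univ : Set (ESp d))) :=
    isOpen_Ioi.prod isOpen_univ
  have hsub : (Set.Ioi (0:ℝ)) ×ˢ (Set.univ : Set (ESp d)) ⊆ Set.Ici 0 ×ˢ Set.univ :=
    Set.prod_mono Set.Ioi_subset_Ici_self (subset_refl _)
  have hjoint : DifferentiableOn ℝ (fun p : ℝ × ESp d => ψ p.1 p.2)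
      ((Set.Ioi (0:ℝ)) ×ˢ Set.univ) := (hψ1.mono hsub).differentiableOn (by simp)
  have hAt : DifferentiableAt ℝ (fun p : ℝ × ESp d => ψ p.1 p.2) (t, x) :=
    hjoint.differentiableAt (hopen.mem_nhds ⟨ht, trivial⟩)
  have hcurve : DifferentiableAt ℝ (fun s : ℝ => ((s, x) : ℝ × ESp d)) t :=
    differentiableAt_id.prodMk (differentiableAt_const x)
  have hcomp : DifferentiableAt ℝ (fun s => ψ s x) t := by have h := hAt.comp t hcurve; exact h
  have hmem : Set.Ici (0:ℝ) ∈ 𝓝 t :=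
    Filter.mem_of_superset (isOpen_Ioi.mem_nhds ht) Set.Ioi_subset_Ici_self
  have : timeDeriv ψ t x = deriv (fun s => ψ s x) t := derivWithin_of_mem_nhds hmem
  rw [this]
  exact hcomp.hasDerivAt

lemma slice_continuousWithinAt (hψ1 : ContDiffOn ℝ (⊤ : ℕ∞) (fun p : ℝ × ESp d => ψ p.1 p.2)
    (Set.Ici 0 ×ˢ Set.univ)) {t : ℝ} (ht : 0 ≤ t) (x : ESp d) :
    ContinuousWithinAt (fun s => ψ s x) (Set.Ici 0) t := by
  have hcont : ContinuousOn (fun p : ℝ × ESp d => ψ p.1 p.2) (Set.Ici 0 ×ˢ Set.univ) :=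
    hψ1.continuousOn
  have hmap : Set.MapsTo (fun s : ℝ => ((s, x) : ℝ × ESp d)) (Set.Ici 0)
      (Set.Ici 0 ×ˢ Set.univ) := fun s hs => ⟨hs, trivial⟩
  have hf : ContinuousWithinAt (fun s : ℝ => ((s, x) : ℝ × ESp d)) (Set.Ici 0) t :=
    (continuous_id.prodMk continuous_const).continuousWithinAt
  exact ContinuousWithinAt.comp (g := fun p : ℝ × ESp d => ψ p.1 p.2)
    (f := fun s : ℝ => ((s, x) : ℝ × ESp d)) (x := t) (s := Set.Ici 0)
    (t := Set.Ici 0 ×ˢ Set.univ) (hcont ((t, x)) ⟨ht, trivial⟩) hf hmap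

end Slice

end MGB
namespace MGB

variable {d : ℕ} {ψ : ℝ → ESp d → ℂ}

lemma decay_K {φ : ℝ → ESp d → ℂ} (h2 : SchwartzDecay (Set.Ici 0) φ) {K : Set ℝ}
    (hK : IsCompact K) (hKs : K ⊆ Set.Ici 0) (k : ℕ) :
    ∃ C : ℝ, ∀ s ∈ K, ∀ x : ESp d, ‖x‖^k * ‖φ s x‖ ≤ C := by
  obtain ⟨C, hC⟩ := h2 K hK hKs k 0
  exact ⟨C, fun s hs x => by simpa [norm_iteratedFDeriv_zero] using hC s hs x⟩

lemma mass_continuousOn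
    (hψ1 : ContDiffOn ℝ (⊤ : ℕ∞) (fun p : ℝ × ESp d => ψ p.1 p.2) (Set.Ici 0 ×ˢ Set.univ))
    (h2 : SchwartzDecay (Set.Ici 0) ψ) : ContinuousOn (Mass ψ) (Set.Ici 0) := by
  intro t ht
  show ContinuousWithinAt (fun s => ∫ x : ESp d, ‖ψ s x‖^2) (Set.Ici 0) t
  have hKc : IsCompact (Set.Icc (0:ℝ) (t+1)) := isCompact_Icc
  have hKs : Set.Icc (0:ℝ) (t+1) ⊆ Set.Ici 0 := fun s hs => hs.1
  obtain ⟨C0, hC0⟩ := decay_K h2 hKc hKs 0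
  obtain ⟨C1, hC1⟩ := decay_K h2 hKc hKs (d+1)
  have htK : t ∈ Set.Icc (0:ℝ) (t+1) := ⟨ht, by linarith⟩
  have hC0n : 0 ≤ C0 := le_trans (norm_nonneg (ψ t 0)) (by simpa using hC0 t htK 0)
  apply continuousWithinAt_of_dominated
    (bound := fun x : ESp d => C0 * (2^(d+1) * (C0 + C1) * ((1 + ‖x‖)^(d+1))⁻¹))
  · filter_upwards [eventually_mem_nhdsWithin] with s hs
    exact ((continuous_norm.comp
      (slice_contDiff hψ1 hs).continuous).pow 2).aestronglyMeasurable
  · have hev : ∀ᶠ s in 𝓝[Set.Ici 0] t, s ∈ Set.Icc (0:ℝ) (t+1) := by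
      have h1 : ∀ᶠ s in 𝓝 t, s < t+1 := eventually_lt_nhds (by linarith)
      filter_upwards [eventually_mem_nhdsWithin, h1.filter_mono nhdsWithin_le_nhds]
        with s hs1 hs2
      exact ⟨hs1, hs2.le⟩
    filter_upwards [hev] with s hs
    refine ae_of_all _ fun x => ?_
    have hb : ‖ψ s x‖ ≤ 2^(d+1) * (C0 + C1) * ((1 + ‖x‖)^(d+1))⁻¹ :=
      decay_bound (fun y => by simpa using hC0 s hs y) (fun y => hC1 s hs y) x
    calc ‖‖ψ s x‖^2‖ = ‖ψ s x‖ * ‖ψ s x‖ := by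
          rw [Real.norm_eq_abs, _root_.abs_of_nonneg (by positivity), pow_two]
      _ ≤ C0 * (2^(d+1) * (C0 + C1) * ((1 + ‖x‖)^(d+1))⁻¹) :=
          mul_le_mul (by simpa using hC0 s hs x) hb (norm_nonneg _) hC0n
  · exact (integrable_inv_pow.const_mul _).const_mul C0
  · refine ae_of_all _ fun x => ?_
    have hw := slice_continuousWithinAt hψ1 ht x
    exact (continuous_norm.continuousAt.comp_continuousWithinAt hw).pow 2

lemma lap_eq (F : SchwartzMap (ESp d) ℂ) :
    lap ⇑F = fun x => ∑ i : Fin d, D2 F i x :=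
  funext fun x => by
    rw [lap]; exact Finset.sum_congr rfl fun i _ => (D2_apply F i x).symm

lemma continuous_Aop (hd : 2 ≤ d) {ω Ω lam mu σ : ℝ} (hσ : 0 ≤ 2*σ)
    (F : SchwartzMap (ESp d) ℂ) : Continuous (Aop ω Ω lam mu σ ⇑F) := by
  have h1 : Continuous (lap ⇑F) := by
    rw [lap_eq F]; exact continuous_finset_sum _ fun i _ => (D2 F i).continuous
  have h2 : Continuous (fun x : ESp d => ‖F x‖ ^ (2*σ)) :=
    (Real.continuous_rpow_const hσ).comp (continuous_norm.comp F.continuous)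
  show Continuous fun x => -(1/2 : ℂ) * lap ⇑F x
    + ((lam * ‖F x‖ ^ (2*σ) : ℝ) : ℂ) * F x
    + (((ω^2/2) * ‖x‖^2 : ℝ) : ℂ) * F x
    - (Ω : ℂ) * rotL ⇑F x - (mu : ℂ) * F x
  apply Continuous.sub
  apply Continuous.sub
  · apply Continuous.add
    apply Continuous.add
    · exact continuous_const.mul h1
    · exact (Complex.continuous_ofReal.comp (continuous_const.mul h2)).mul F.continuous
    · exact (Complex.continuous_ofReal.comp
        (continuous_const.mul (continuous_norm.pow 2))).mul F.continuous
  · exact continuous_const.mul (continuous_rotL hd F)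
  · exact continuous_const.mul F.continuous

lemma mass_hasDerivAt
    (hψ1 : ContDiffOn ℝ (⊤ : ℕ∞) (fun p : ℝ × ESp d => ψ p.1 p.2) (Set.Ici 0 ×ˢ Set.univ))
    (h2 : SchwartzDecay (Set.Ici 0) ψ) (h3 : SchwartzDecay (Set.Ici 0) (fun t => timeDeriv ψ t))
    {t : ℝ} (ht : 0 < t) {g : ESp d → ℂ} (hg : Continuous g)
    (hEq : ∀ x, timeDeriv ψ t x = g x) :
    HasDerivAt (Mass ψ)
      (∫ x : ESp d, 2 * ((starRingEnd ℂ) (ψ t x) * timeDeriv ψ t x).re) t := by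
  have hKc : IsCompact (Set.Icc (t/2) (t+1)) := isCompact_Icc
  have hKs : Set.Icc (t/2) (t+1) ⊆ Set.Ici 0 := fun s hs => le_trans (by linarith) hs.1
  obtain ⟨C0, hC0⟩ := decay_K h2 hKc hKs 0
  obtain ⟨C1, hC1⟩ := decay_K h2 hKc hKs (d+1)
  obtain ⟨C2, hC2⟩ := decay_K h3 hKc hKs 0
  have htK : t ∈ Set.Icc (t/2) (t+1) := ⟨by linarith, by linarith⟩
  have hC2n : 0 ≤ C2 := le_trans (norm_nonneg (timeDeriv ψ t 0))
    (by simpa using hC2 t htK 0)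
  set ε : ℝ := min (t/2) 1 with hε
  have hεpos : 0 < ε := lt_min (by linarith) one_pos
  have hball : ∀ s ∈ Metric.ball t ε, s ∈ Set.Icc (t/2) (t+1) ∧ 0 < s := by
    intro s hs
    rw [Metric.mem_ball, Real.dist_eq, abs_lt] at hs
    have h1 : ε ≤ t/2 := min_le_left _ _
    have h2' : ε ≤ 1 := min_le_right _ _
    constructor
    · constructor <;> nlinarith [hs.1, hs.2]
    · nlinarith [hs.1]
  have key := hasDerivAt_integral_of_dominated_loc_of_deriv_le
    (F := fun s (x : ESp d) => ‖ψ s x‖^2)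
    (F' := fun s (x : ESp d) => 2 * ((starRingEnd ℂ) (ψ s x) * timeDeriv ψ s x).re)
    (x₀ := t) (s := Metric.ball t ε) (μ := volume)
    (bound := fun x : ESp d => 2 * C2 * (2^(d+1) * (C0 + C1) * ((1 + ‖x‖)^(d+1))⁻¹))
    (Metric.ball_mem_nhds t hεpos) ?_ ?_ ?_ ?_ ?_ ?_
  · exact key.2
  · -- measurability of F s near t
    filter_upwards [isOpen_Ioi.eventually_mem ht] with s (hs : 0 < s)
    exact ((continuous_norm.comp
      (slice_contDiff hψ1 hs.le).continuous).pow 2).aestronglyMeasurable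
  · -- integrability of F t
    show Integrable (fun x : ESp d => ‖ψ t x‖^2) volume
    rw [show (fun x : ESp d => ‖ψ t x‖^2) = fun x => ‖ψ t x‖^2 from
      funext fun x => rfl]
    exact integrable_normsq (Fslice hψ1 h2 ht.le)
  · -- measurability of F' t
    show AEStronglyMeasurable
      (fun x : ESp d => 2 * ((starRingEnd ℂ) (ψ t x) * timeDeriv ψ t x).re) volume
    have : (fun x : ESp d => 2 * ((starRingEnd ℂ) (ψ t x) * timeDeriv ψ t x).re)
        = fun x => 2 * ((starRingEnd ℂ) (ψ t x) * g x).re := by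
      funext x; rw [hEq x]
    rw [this]
    exact (continuous_const.mul (Complex.continuous_re.comp
      ((Complex.conjCLE.continuous.comp
        (slice_contDiff hψ1 ht.le).continuous).mul hg))).aestronglyMeasurable
  · -- uniform bound on the ball
    refine ae_of_all _ fun x => fun s hs => ?_
    obtain ⟨hsK, hspos⟩ := hball s hs
    have hb : ‖ψ s x‖ ≤ 2^(d+1) * (C0 + C1) * ((1 + ‖x‖)^(d+1))⁻¹ :=
      decay_bound (fun y => by simpa using hC0 s hsK y) (fun y => hC1 s hsK y) x
    have hD : ‖timeDeriv ψ s x‖ ≤ C2 := by simpa using hC2 s hsK x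
    calc ‖2 * ((starRingEnd ℂ) (ψ s x) * timeDeriv ψ s x).re‖
        = 2 * |((starRingEnd ℂ) (ψ s x) * timeDeriv ψ s x).re| := by
          rw [norm_mul, Real.norm_ofNat, Real.norm_eq_abs]
      _ ≤ 2 * ‖(starRingEnd ℂ) (ψ s x) * timeDeriv ψ s x‖ := by
          have := Complex.abs_re_le_norm ((starRingEnd ℂ) (ψ s x) * timeDeriv ψ s x)
          linarith
      _ = 2 * (‖ψ s x‖ * ‖timeDeriv ψ s x‖) := by rw [norm_mul, RCLike.norm_conj]
      _ ≤ 2 * ((2^(d+1) * (C0 + C1) * ((1 + ‖x‖)^(d+1))⁻¹) * C2) := by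
          apply mul_le_mul_of_nonneg_left _ (by norm_num)
          exact mul_le_mul hb hD (norm_nonneg _) (le_trans (norm_nonneg _) hb)
      _ = 2 * C2 * (2^(d+1) * (C0 + C1) * ((1 + ‖x‖)^(d+1))⁻¹) := by ring
  · -- bound integrable
    exact ((integrable_inv_pow.const_mul _).const_mul _)
  · -- differentiability on the ball
    refine ae_of_all _ fun x => fun s hs => ?_
    exact hasDerivAt_normsq (time_hasDerivAt hψ1 (hball s hs).2 x)

end MGB

/-- Grönwall-type mass bound: `M(t) ≤ M(0)(1 + 2μt cosϑ e^{2μt cosϑ})`. -/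
theorem mass_growth_bound (d : ℕ) (hd : d = 2 ∨ d = 3) (ω Ω lam mu σ ϑ : ℝ)
    (hlam : 0 ≤ lam) (hmu : 0 ≤ mu) (hω : |Ω| < ω) (hσ : 0 < σ)
    (hϑ : ϑ ∈ Set.Ioo (-(π/2)) (π/2)) (ψ : ℝ → ESp d → ℂ)
    (hψ : IsSmoothDecaySol d (Set.Ici 0) ϑ ω Ω lam mu σ ψ) :
    ∀ t : ℝ, 0 ≤ t →
      Mass ψ t ≤ Mass ψ 0 *
        (1 + 2 * mu * t * Real.cos ϑ * Real.exp (2 * mu * t * Real.cos ϑ)) := by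
  open MGB in
  obtain ⟨hψ1, hψ2, hψ3, hpde⟩ := hψ
  have hd2 : 2 ≤ d := by rcases hd with h | h <;> omega
  have hcos : 0 < Real.cos ϑ := Real.cos_pos_of_mem_Ioo hϑ
  set c : ℝ := 2 * mu * Real.cos ϑ with hc
  have hcn : 0 ≤ c := by
    rw [hc]; exact mul_nonneg (mul_nonneg (by norm_num) hmu) hcos.le
  have hMnn : ∀ s : ℝ, 0 ≤ Mass ψ s := fun s => integral_nonneg fun x => by positivity
  have hkey : ∀ t : ℝ, 0 < t → ∃ m' : ℝ, HasDerivAt (Mass ψ) m' t ∧ m' ≤ c * Mass ψ t := by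
    intro t ht
    set F := MGB.Fslice hψ1 hψ2 ht.le with hF
    set e : ℂ := Complex.exp (-((ϑ:ℂ) * Complex.I)) with he
    have hEqt : ∀ x : ESp d, timeDeriv ψ t x = -e * MGB.Aop ω Ω lam mu σ (ψ t) x := by
      intro x
      have h := hpde t ht.le x
      have hmulexp : e * Complex.exp ((ϑ:ℂ) * Complex.I) = 1 := by
        rw [he, ← Complex.exp_add]; simp
      calc timeDeriv ψ t x
          = (e * Complex.exp ((ϑ:ℂ) * Complex.I)) * timeDeriv ψ t x := by
            rw [hmulexp, one_mul]
        _ = -e * (-Complex.exp ((ϑ:ℂ) * Complex.I) * timeDeriv ψ t x) := by ring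
        _ = -e * MGB.Aop ω Ω lam mu σ (ψ t) x := by rw [h]; rfl
    have hgc : Continuous (fun x : ESp d => -e * MGB.Aop ω Ω lam mu σ (ψ t) x) :=
      continuous_const.mul (show Continuous (MGB.Aop ω Ω lam mu σ (ψ t)) from
        MGB.continuous_Aop hd2 (by positivity) F)
    have hder := MGB.mass_hasDerivAt hψ1 hψ2 hψ3 ht hgc hEqt
    obtain ⟨hint, R, hR, hRge⟩ := MGB.energy_identity hd2 hω hlam hσ hmu F
    have hMt : Mass ψ t = ∫ x : ESp d, ‖F x‖^2 := by
      show (∫ x : ESp d, ‖ψ t x‖^2) = _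
      exact integral_congr_ae (ae_of_all _ fun x => by
        rfl)
    have hval : (∫ x : ESp d, 2 * ((starRingEnd ℂ) (ψ t x) * timeDeriv ψ t x).re)
        = 2 * (-e * ((R:ℝ):ℂ)).re := by
      calc (∫ x : ESp d, 2 * ((starRingEnd ℂ) (ψ t x) * timeDeriv ψ t x).re)
          = ∫ x : ESp d,
              2 * ((-e * ((starRingEnd ℂ) (F x) * MGB.Aop ω Ω lam mu σ ⇑F x)).re) := by
            refine integral_congr_ae (ae_of_all _ fun x => ?_)
            simp only
            rw [hEqt x, show (starRingEnd ℂ) (ψ t x) * (-e * MGB.Aop ω Ω lam mu σ (ψ t) x)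
              = -e * ((starRingEnd ℂ) (ψ t x) * MGB.Aop ω Ω lam mu σ (ψ t) x) from by ring]
            rfl
        _ = 2 * ∫ x : ESp d,
              ((-e * ((starRingEnd ℂ) (F x) * MGB.Aop ω Ω lam mu σ ⇑F x)).re) :=
            integral_const_mul 2 _
        _ = 2 * (∫ x : ESp d,
              -e * ((starRingEnd ℂ) (F x) * MGB.Aop ω Ω lam mu σ ⇑F x)).re := by
            exact congrArg (fun r => 2 * r) (integral_re (hint.const_mul _))
        _ = 2 * (-e * ((R:ℝ):ℂ)).re := by
            rw [integral_const_mul, hR]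
    have he_val : e = ((Real.cos ϑ : ℝ) : ℂ) - ((Real.sin ϑ : ℝ) : ℂ) * Complex.I := by
      rw [he, show -((ϑ:ℂ) * Complex.I) = ((-ϑ : ℝ) : ℂ) * Complex.I from by push_cast; ring,
        Complex.exp_mul_I, ← Complex.ofReal_cos, ← Complex.ofReal_sin,
        Real.cos_neg, Real.sin_neg]
      push_cast
      ring
    have hre : 2 * (-e * ((R:ℝ):ℂ)).re = -2 * Real.cos ϑ * R := by
      rw [he_val, show -((((Real.cos ϑ : ℝ)):ℂ) - ((Real.sin ϑ : ℝ):ℂ) * Complex.I) * ((R:ℝ):ℂ)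
          = (((-(Real.cos ϑ * R) : ℝ)):ℂ) + (((Real.sin ϑ * R : ℝ)):ℂ) * Complex.I from by
          push_cast; ring]
      rw [Complex.add_re, Complex.ofReal_re, Complex.mul_re, Complex.I_re, Complex.I_im,
        Complex.ofReal_re, Complex.ofReal_im]
      ring
    refine ⟨_, hder, ?_⟩
    rw [hval, hre, hMt, hc]
    have hmul := mul_le_mul_of_nonneg_left hRge
      (le_of_lt (by positivity : (0:ℝ) < 2 * Real.cos ϑ))
    nlinarith [hmul]
  have hcont := MGB.mass_continuousOn hψ1 hψ2
  have hexpD : ∀ t : ℝ, HasDerivAt (fun u : ℝ => Real.exp (-(c*u)))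
      (Real.exp (-(c*t)) * -c) t := by
    intro t
    have h1 : HasDerivAt (fun u : ℝ => -(c*u)) (-c) t := by
      have h := (show HasDerivAt (fun u : ℝ => -(c*u)) (-(c*1)) t from ((hasDerivAt_id t).const_mul c).neg); simpa using h
    exact h1.exp
  have hanti : AntitoneOn (fun t => Mass ψ t * Real.exp (-(c*t))) (Set.Ici 0) := by
    apply antitoneOn_of_deriv_nonpos (convex_Ici 0)
    · exact hcont.mul (Real.continuous_exp.comp
        ((continuous_const.mul continuous_id).neg)).continuousOn
    · rw [interior_Ici]
      intro t ht
      obtain ⟨m', hm', _⟩ := hkey t ht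
      exact (hm'.mul (hexpD t)).differentiableAt.differentiableWithinAt
    · rw [interior_Ici]
      intro t ht
      obtain ⟨m', hm', hle⟩ := hkey t ht
      rw [(show HasDerivAt (fun t => Mass ψ t * Real.exp (-(c*t))) _ t from hm'.mul (hexpD t)).deriv]
      have hep := Real.exp_pos (-(c*t))
      nlinarith [hle, hep, hMnn t]
  intro t ht
  have h0 : Mass ψ t * Real.exp (-(c*t)) ≤ Mass ψ 0 * Real.exp (-(c*0)) :=
    hanti Set.self_mem_Ici ht ht
  rw [mul_zero, neg_zero, Real.exp_zero, mul_one] at h0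
  have hee : Real.exp (-(c*t)) * Real.exp (c*t) = 1 := by
    rw [← Real.exp_add]; simp
  have h2 : Mass ψ t ≤ Mass ψ 0 * Real.exp (c*t) := by
    calc Mass ψ t = Mass ψ t * (Real.exp (-(c*t)) * Real.exp (c*t)) := by
          rw [hee, mul_one]
      _ = (Mass ψ t * Real.exp (-(c*t))) * Real.exp (c*t) := by ring
      _ ≤ Mass ψ 0 * Real.exp (c*t) :=
          mul_le_mul_of_nonneg_right h0 (Real.exp_pos _).le
  have h3 : Real.exp (c*t) ≤ 1 + (c*t) * Real.exp (c*t) := by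
    have h := Real.add_one_le_exp (-(c*t))
    have hmul : (-(c*t) + 1) * Real.exp (c*t) ≤ Real.exp (-(c*t)) * Real.exp (c*t) :=
      mul_le_mul_of_nonneg_right h (Real.exp_pos _).le
    rw [hee] at hmul
    nlinarith [hmul]
  have hct : c * t = 2 * mu * t * Real.cos ϑ := by rw [hc]; ring
  calc Mass ψ t ≤ Mass ψ 0 * Real.exp (c*t) := h2
    _ ≤ Mass ψ 0 * (1 + (c*t) * Real.exp (c*t)) :=
        mul_le_mul_of_nonneg_left h3 (hMnn 0)
    _ = Mass ψ 0 * (1 + 2*mu*t*Real.cos ϑ * Real.exp (2*mu*t*Real.cos ϑ)) := by rw [hct]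
end
end

section
/- Let d ∈ {2,3}, ω > |Ω| ≥ 0, λ ≥ 0, σ > 0 and μ < 0. If φ : ℝ^d → ℂ is a Schwartz-class solution of the stationary equation −(1/2)Δφ + λ|φ|^{2σ}φ + (ω²/2)|x|²φ − Ω Lφ − μφ = 0 on ℝ^d, then φ ≡ 0. -/
/-!
At a point `x₀` where `|φ|` is maximal, the second-order condition for `|φ|²` along each
coordinate line gives `Re (conj φ · Δφ) ≤ -|∇φ|²`. Pairing the equation with `φ x₀` in the real
inner product of `ℂ`, the kinetic term thus contributes at least `(|∂₁φ|² + |∂₂φ|²) / 2`; by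
Cauchy–Schwarz and AM–GM this absorbs the rotation term up to `Ω² (x₁² + x₂²) |φ|² / 2`, which the
trap term `ω² |x|² |φ|² / 2` dominates. What is left is `-μ |φ x₀|² ≤ 0`, so the maximum
`|φ x₀|` of `|φ|` vanishes.
-/

open MeasureTheory Real Complex Filter Topology ENNReal

noncomputable section

open scoped RealInnerProductSpace

theorem IsLocalMax.deriv_deriv_nonpos {f : ℝ → ℝ} {a : ℝ} (h : IsLocalMax f a)
    (hc : ContinuousAt f a) : deriv (deriv f) a ≤ 0 := by
  -- otherwise the second-derivative test makes `a` a local minimum too, so `f` is locally constant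
  by_contra! hpos
  have hmin : IsLocalMin f a := isLocalMin_of_deriv_deriv_pos hpos h.deriv_eq_zero hc
  have hconst : f =ᶠ[𝓝 a] fun _ => f a :=
    (h.and hmin).mono fun _ hx => le_antisymm hx.1 hx.2
  have : deriv (deriv f) a = 0 := by simp [hconst.deriv.deriv_eq]
  exact hpos.ne' this

section SecondOrder

variable {E F : Type*} [NormedAddCommGroup E] [NormedSpace ℝ E]
  [NormedAddCommGroup F] [InnerProductSpace ℝ F]

theorem IsLocalMax.inner_fderiv_fderiv_add_norm_fderiv_sq_nonpos {f : E → F} {x₀ : E}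
    (hmax : IsLocalMax (fun y => ‖f y‖) x₀) (hf : ContDiff ℝ 2 f) (v : E) :
    ⟪f x₀, fderiv ℝ (fun y => fderiv ℝ f y v) x₀ v⟫ + ‖fderiv ℝ f x₀ v‖ ^ 2 ≤ 0 := by
  set D : E → F := fun y => fderiv ℝ f y v
  set L : ℝ → E := fun t => x₀ + t • v
  have hL0 : L 0 = x₀ := by simp [L]
  have hL : ∀ t, HasDerivAt L v t := fun t =>
    (((hasDerivAt_id t).smul_const v).const_add x₀).congr_deriv (one_smul ℝ v)
  have hfD : ∀ y, HasFDerivAt f (fderiv ℝ f y) y := fun y =>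
    (hf.differentiable (by norm_num) y).hasFDerivAt
  have hDD : ∀ y, HasFDerivAt D (fderiv ℝ D y) y := fun y =>
    (((hf.fderiv_right (m := 1) (by norm_num)).clm_apply contDiff_const).differentiable
      (by norm_num) y).hasFDerivAt
  have hderiv : deriv (fun t => ‖f (L t)‖ ^ 2) = fun t => 2 * ⟪f (L t), D (L t)⟫ :=
    funext fun t => ((hfD (L t)).comp_hasDerivAt t (hL t)).norm_sq.deriv
  have hderiv2 : HasDerivAt (fun t => 2 * ⟪f (L t), D (L t)⟫)
      (2 * (⟪f x₀, fderiv ℝ D x₀ v⟫ + ⟪D x₀, D x₀⟫)) 0 := by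
    have := (((hfD (L 0)).comp_hasDerivAt 0 (hL 0)).inner ℝ
      ((hDD (L 0)).comp_hasDerivAt 0 (hL 0))).const_mul 2
    simpa only [Function.comp_apply, hL0] using this
  have hmaxL : IsLocalMax (fun t => ‖f (L t)‖ ^ 2) 0 := by
    have : IsLocalMax (fun t => ‖f (L t)‖) 0 :=
      (hL0 ▸ hmax).comp_continuous (hL 0).continuousAt
    exact this.mono fun t ht => pow_le_pow_left₀ (norm_nonneg _) ht 2
  have hcont : ContinuousAt (fun t => ‖f (L t)‖ ^ 2) 0 :=
    (((hfD (L 0)).comp_hasDerivAt 0 (hL 0)).norm_sq).continuousAt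
  have := hmaxL.deriv_deriv_nonpos hcont
  rw [hderiv, hderiv2.deriv, real_inner_self_eq_norm_sq] at this
  linarith

end SecondOrder

theorem pdN_val {d : ℕ} (i : Fin d) (f : ESp d → ℂ) :
    pdN i f = fun y => fderiv ℝ f y (EuclideanSpace.single i 1) := by
  funext y
  simp [pdN]

theorem pdN_of_le {d i : ℕ} (h : d ≤ i) (f : ESp d → ℂ) (x : ESp d) : pdN i f x = 0 :=
  dif_neg h.not_gt

theorem coord_val {d : ℕ} (x : ESp d) (i : Fin d) : coord x i = x i := by
  simp [coord]

theorem coord_of_le {d i : ℕ} (h : d ≤ i) (x : ESp d) : coord x i = 0 :=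
  dif_neg h.not_gt

theorem IsLocalMax.inner_lap_add_sum_norm_pdN_sq_nonpos {d : ℕ} {f : ESp d → ℂ} {x₀ : ESp d}
    (hmax : IsLocalMax (fun y => ‖f y‖) x₀) (hf : ContDiff ℝ 2 f) :
    ⟪f x₀, lap f x₀⟫ + ∑ i : Fin d, ‖pdN i f x₀‖ ^ 2 ≤ 0 := by
  rw [lap, inner_sum, ← Finset.sum_add_distrib]
  refine Finset.sum_nonpos fun i _ => ?_
  simpa only [pdN_val] using hmax.inner_fderiv_fderiv_add_norm_fderiv_sq_nonpos hf _

theorem apply_zero_add_apply_one_le_sum_fin {d : ℕ} {g : ℕ → ℝ} (hg : ∀ i, 0 ≤ g i)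
    (hd : ∀ i, d ≤ i → g i = 0) :
    g 0 + g 1 ≤ ∑ i : Fin d, g i := by
  rw [Fin.sum_univ_eq_sum_range]
  match d with
  | 0 => simp [hd 0 le_rfl, hd 1 zero_le_one]
  | 1 => simp [hd 1 le_rfl]
  | n + 2 =>
    rw [Finset.sum_range_succ', Finset.sum_range_succ', zero_add, add_assoc,
      add_comm (g 1)]
    exact le_add_of_nonneg_left (Finset.sum_nonneg fun i _ => hg _)

theorem norm_pdN_zero_sq_add_norm_pdN_one_sq_le {d : ℕ} (f : ESp d → ℂ) (x : ESp d) :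
    ‖pdN 0 f x‖ ^ 2 + ‖pdN 1 f x‖ ^ 2 ≤ ∑ i : Fin d, ‖pdN i f x‖ ^ 2 :=
  apply_zero_add_apply_one_le_sum_fin (g := fun i => ‖pdN i f x‖ ^ 2) (fun _ => by positivity)
    fun _ h => by simp [pdN_of_le h]

theorem coord_zero_sq_add_coord_one_sq_le {d : ℕ} (x : ESp d) :
    coord x 0 ^ 2 + coord x 1 ^ 2 ≤ ‖x‖ ^ 2 := by
  have := apply_zero_add_apply_one_le_sum_fin (d := d) (g := fun i => coord x i ^ 2)
    (fun _ => by positivity) fun _ h => by simp [coord_of_le h]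
  simp only [coord_val] at this
  simpa [EuclideanSpace.norm_sq_eq] using this

theorem mul_inner_rotL_le {d : ℕ} (Ω : ℝ) (f : ESp d → ℂ) (x : ESp d) :
    Ω * ⟪f x, rotL f x⟫ ≤ (‖pdN 0 f x‖ ^ 2 + ‖pdN 1 f x‖ ^ 2
      + Ω ^ 2 * (coord x 0 ^ 2 + coord x 1 ^ 2) * ‖f x‖ ^ 2) / 2 := by
  rw [rotL]
  generalize f x = a, pdN 0 f x = p, pdN 1 f x = q, coord x 0 = s, coord x 1 = t
  simp only [Complex.inner, ← Complex.normSq_eq_norm_sq, Complex.normSq_apply, Complex.mul_re,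
    Complex.mul_im, Complex.sub_re, Complex.sub_im, Complex.neg_re, Complex.neg_im,
    Complex.I_re, Complex.I_im, Complex.ofReal_re, Complex.ofReal_im, Complex.conj_re,
    Complex.conj_im]
  nlinarith [sq_nonneg (Ω * s * a.re - q.im), sq_nonneg (Ω * s * a.im + q.re),
    sq_nonneg (Ω * t * a.re + p.im), sq_nonneg (Ω * t * a.im - p.re)]

theorem exists_forall_norm_le_of_tendsto_cocompact {E F : Type*} [TopologicalSpace E]
    [NormedAddCommGroup F] {f : E → F} (hf : Continuous f) (h : Tendsto f (cocompact E) (𝓝 0))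
    {x : E} (hx : f x ≠ 0) : ∃ x₀, ∀ y, ‖f y‖ ≤ ‖f x₀‖ :=
  (continuous_norm.comp hf).exists_forall_ge' x <|
    (h.norm.eventually (gt_mem_nhds (by simpa using hx))).mono fun _ hy => hy.le

theorem no_nontrivial_steady_states_negative_mu_general (d : ℕ)
    (ω Ω lam σ mu : ℝ) (hω : |Ω| < ω) (hlam : 0 ≤ lam)
    (hmu : mu < 0) (φ : SchwartzMap (ESp d) ℂ)
    (hφ : ∀ x : ESp d,
      -(1/2 : ℂ) * lap (⇑φ) x
        + ((lam * ‖φ x‖ ^ (2*σ) : ℝ) : ℂ) * φ x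
        + (((ω^2/2) * ‖x‖^2 : ℝ) : ℂ) * φ x
        - (Ω : ℂ) * rotL (⇑φ) x - (mu : ℂ) * φ x = 0) :
    ∀ x : ESp d, φ x = 0 := by
  intro x
  by_contra hx
  obtain ⟨x₀, hx₀⟩ :=
    exists_forall_norm_le_of_tendsto_cocompact φ.continuous (zero_at_infty φ) hx
  have hmax : IsLocalMax (fun y => ‖φ y‖) x₀ := Filter.Eventually.of_forall hx₀
  have hlap := hmax.inner_lap_add_sum_norm_pdN_sq_nonpos (φ.smooth 2)
  have hpdN := norm_pdN_zero_sq_add_norm_pdN_one_sq_le (⇑φ) x₀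
  have hrot := mul_inner_rotL_le Ω (⇑φ) x₀
  have hcoord : Ω ^ 2 * (coord x₀ 0 ^ 2 + coord x₀ 1 ^ 2) * ‖φ x₀‖ ^ 2
      ≤ ω ^ 2 * ‖x₀‖ ^ 2 * ‖φ x₀‖ ^ 2 := by
    gcongr ?_ * ?_ * _
    · exact sq_le_sq.2 (hω.le.trans (le_abs_self ω))
    · exact coord_zero_sq_add_coord_one_sq_le x₀
  have hnl : 0 ≤ lam * ‖φ x₀‖ ^ (2 * σ) * ‖φ x₀‖ ^ 2 := by positivity
  have hpos : 0 < -mu * ‖φ x₀‖ ^ 2 :=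
    mul_pos (neg_pos.2 hmu) (pow_pos ((norm_pos_iff.2 hx).trans_le (hx₀ x)) 2)
  have heq := congrArg (⟪φ x₀, ·⟫) (hφ x₀)
  rw [show -(1 / 2 : ℂ) = ((-(1 / 2) : ℝ) : ℂ) by push_cast; ring] at heq
  simp only [inner_add_right, inner_sub_right, inner_zero_right, ← Complex.real_smul,
    inner_smul_right, real_inner_self_eq_norm_sq] at heq
  linarith

/-- For `μ < 0` there are no nontrivial Schwartz-class steady states of the
stationary Gross–Pitaevskii equation with rotation. -/
theorem no_nontrivial_steady_states_negative_mu (d : ℕ) (hd : d = 2 ∨ d = 3)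
    (ω Ω lam σ mu : ℝ) (hω : |Ω| < ω) (hΩ : 0 ≤ |Ω|) (hlam : 0 ≤ lam) (hσ : 0 < σ)
    (hmu : mu < 0) (φ : SchwartzMap (ESp d) ℂ)
    (hφ : ∀ x : ESp d,
      -(1/2 : ℂ) * lap (⇑φ) x
        + ((lam * ‖φ x‖ ^ (2*σ) : ℝ) : ℂ) * φ x
        + (((ω^2/2) * ‖x‖^2 : ℝ) : ℂ) * φ x
        - (Ω : ℂ) * rotL (⇑φ) x - (mu : ℂ) * φ x = 0) :
    ∀ x : ESp d, φ x = 0 :=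
  no_nontrivial_steady_states_negative_mu_general d ω Ω lam σ mu hω hlam hmu φ hφ
end
end
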